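/- arXiv:1409.0120 — 8 statements merged into one kernel-verified Lean document; each statement's English description precedes it below -/
import Mathlib

section
/- Let P be a mixed polynomial in n complex variables and w ∈ ℂⁿ. Then w is a singularity of P if and only if there exists α ∈ ℂ with |α| = 1 such that conj(∂P/∂z_j(w)) = α·(∂P/∂z̄_j(w)) for every j = 1,…,n. -/
/-!
Let `L` be the real differential of `P` at `w`. A real relation `a • d(Re P) + b • d(Im P) = 0`
says exactly that `Re (c * L v) = 0` for all `v`, where `c = a - b i ≠ 0`. It suffices to test
this on the real basis `e_j, i e_j`, and for each `j` the two conditions together are equivalent to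
`conj (∂P/∂z_j) = α * ∂P/∂z̄_j` with `α = -c / conj c`. Every `α` of modulus one has this form.
-/

open Complex

noncomputable section

/-- The Wirtinger derivative `∂P/∂z_j` at `w`, defined via the real Fréchet derivative:
`∂P/∂z_j = (1/2)(∂P/∂x_j − i ∂P/∂y_j)`. -/
def wD {n : ℕ} (P : (Fin n → ℂ) → ℂ) (j : Fin n) (w : Fin n → ℂ) : ℂ :=
  (1 / 2 : ℂ) *
    (fderiv ℝ P w (Pi.single j 1) - Complex.I * fderiv ℝ P w (Pi.single j Complex.I))

/-- The Wirtinger derivative `∂P/∂z̄_j` at `w`: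
`∂P/∂z̄_j = (1/2)(∂P/∂x_j + i ∂P/∂y_j)`. -/
def wDbar {n : ℕ} (P : (Fin n → ℂ) → ℂ) (j : Fin n) (w : Fin n → ℂ) : ℂ :=
  (1 / 2 : ℂ) *
    (fderiv ℝ P w (Pi.single j 1) + Complex.I * fderiv ℝ P w (Pi.single j Complex.I))

/-- `P : ℂⁿ → ℂ` is a mixed polynomial: a finite sum `Σ c_{ν,μ} z^ν (conj z)^μ`. -/
def IsMixedPoly {n : ℕ} (P : (Fin n → ℂ) → ℂ) : Prop :=
  ∃ c : ((Fin n → ℕ) × (Fin n → ℕ)) →₀ ℂ, ∀ z : Fin n → ℂ,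
    P z = c.sum fun νμ a =>
      a * (∏ j, z j ^ νμ.1 j) * ∏ j, (starRingEnd ℂ) (z j) ^ νμ.2 j

/-- `w` is a singularity of `P` : the gradients (real differentials) of `Re P` and `Im P`
are linearly dependent at `w`. -/
def IsSingularity {n : ℕ} (P : (Fin n → ℂ) → ℂ) (w : Fin n → ℂ) : Prop :=
  ∃ a b : ℝ, ¬(a = 0 ∧ b = 0) ∧
    a • fderiv ℝ (fun z => (P z).re) w + b • fderiv ℝ (fun z => (P z).im) w = 0

open ComplexConjugate

theorem IsMixedPoly.differentiable {n : ℕ} {P : (Fin n → ℂ) → ℂ} (hP : IsMixedPoly P) :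
    Differentiable ℝ P := by
  obtain ⟨c, hc⟩ := hP
  rw [funext hc]
  have hconj : Differentiable ℝ fun z : ℂ => conj z := conjCLE.differentiable
  unfold Finsupp.sum
  fun_prop

theorem exists_smul_re_comp_add_smul_im_comp_eq_zero_iff {E : Type*} [AddCommGroup E]
    [Module ℝ E] [TopologicalSpace E] (L : E →L[ℝ] ℂ) :
    (∃ a b : ℝ, ¬(a = 0 ∧ b = 0) ∧ a • reCLM.comp L + b • imCLM.comp L = 0) ↔
      ∃ c : ℂ, c ≠ 0 ∧ ∀ v, (c * L v).re = 0 := by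
  constructor
  · rintro ⟨a, b, hab, h⟩
    refine ⟨⟨a, -b⟩, fun h0 => hab ⟨congrArg re h0, neg_eq_zero.mp (congrArg im h0)⟩, fun v => ?_⟩
    have := DFunLike.congr_fun h v
    simp only [add_apply, smul_apply, ContinuousLinearMap.comp_apply, reCLM_apply,
      imCLM_apply, smul_eq_mul, zero_apply] at this
    simp only [mul_re]
    linarith
  · rintro ⟨c, hc, h⟩
    refine ⟨c.re, -c.im, fun hab => hc (Complex.ext hab.1 (neg_eq_zero.mp hab.2)), ?_⟩
    ext v
    have := h v
    simp only [mul_re] at this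
    simp only [add_apply, smul_apply, ContinuousLinearMap.comp_apply, reCLM_apply,
      imCLM_apply, smul_eq_mul, zero_apply]
    linarith

theorem isSingularity_iff_exists_re_mul_fderiv_eq_zero {n : ℕ} {P : (Fin n → ℂ) → ℂ}
    {w : Fin n → ℂ} (hP : DifferentiableAt ℝ P w) :
    IsSingularity P w ↔ ∃ c : ℂ, c ≠ 0 ∧ ∀ v, (c * fderiv ℝ P w v).re = 0 := by
  have hre : fderiv ℝ (fun z => (P z).re) w = reCLM.comp (fderiv ℝ P w) :=
    (reCLM.hasFDerivAt.comp w hP.hasFDerivAt).fderiv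
  have him : fderiv ℝ (fun z => (P z).im) w = imCLM.comp (fderiv ℝ P w) :=
    (imCLM.hasFDerivAt.comp w hP.hasFDerivAt).fderiv
  rw [IsSingularity, hre, him]
  exact exists_smul_re_comp_add_smul_im_comp_eq_zero_iff _

theorem forall_re_mul_apply_eq_zero_iff_single {ι : Type*} [Fintype ι] [DecidableEq ι]
    (L : (ι → ℂ) →L[ℝ] ℂ) (c : ℂ) :
    (∀ v, (c * L v).re = 0) ↔
      ∀ j, (c * L (Pi.single j 1)).re = 0 ∧ (c * L (Pi.single j I)).re = 0 := by
  refine ⟨fun h j => ⟨h _, h _⟩, fun h v => ?_⟩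
  have hsingle (j : ι) : (Pi.single j (v j) : ι → ℂ)
      = (v j).re • (Pi.single j 1 : ι → ℂ) + (v j).im • (Pi.single j I : ι → ℂ) := by
    rw [← Pi.single_smul, ← Pi.single_smul, ← Pi.single_add, real_smul, real_smul, mul_one,
      re_add_im]
  rw [← Finset.univ_sum_single v, map_sum, Finset.mul_sum, re_sum]
  refine Finset.sum_eq_zero fun j _ => ?_
  simp [hsingle, mul_add, mul_left_comm c, (h j).1, (h j).2, Complex.real_smul]

theorem conj_half_mul_sub_eq_neg_div_conj_mul_iff {c u v : ℂ} (hc : c ≠ 0) :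
    conj ((1 / 2) * (u - I * v)) = (-c / conj c) * ((1 / 2) * (u + I * v)) ↔
      (c * u).re = 0 ∧ (c * v).re = 0 := by
  have key : conj ((1 / 2) * (u - I * v)) * conj c + c * ((1 / 2) * (u + I * v))
      = (c * u).re + I * (c * v).re := by
    simp only [re_eq_add_conj, map_mul, map_sub, map_div₀, map_one, map_ofNat, conj_I]
    ring
  rw [eq_comm, div_mul_eq_mul_div, div_eq_iff ((map_ne_zero _).mpr hc), neg_mul, eq_comm,
    ← add_eq_zero_iff_eq_neg, key]
  simp [Complex.ext_iff]

theorem Complex.norm_eq_one_iff_exists_eq_neg_div_conj {α : ℂ} :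
    ‖α‖ = 1 ↔ ∃ c : ℂ, c ≠ 0 ∧ α = -c / conj c := by
  constructor
  · intro hα
    rcases eq_or_ne α (-1) with rfl | hα1
    · exact ⟨1, one_ne_zero, by simp⟩
    -- `conj c * α = -c` for `c = I * (1 + α)` because `conj α * α = 1`
    have hc : I * (1 + α) ≠ 0 := mul_ne_zero I_ne_zero fun h => hα1 (by linear_combination h)
    refine ⟨I * (1 + α), hc, ?_⟩
    have hαα : conj α * α = 1 := by
      rw [← normSq_eq_conj_mul_self, normSq_eq_norm_sq, hα]; norm_num
    rw [eq_div_iff ((map_ne_zero _).mpr hc)]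
    simp only [map_mul, map_add, map_one, conj_I]
    linear_combination -I * hαα
  · rintro ⟨c, hc, rfl⟩
    simp [hc]

/-- Oka's criterion: `w` is a singularity of the mixed polynomial `P` iff there is `α`
with `|α| = 1` and `conj(∂P/∂z_j(w)) = α · ∂P/∂z̄_j(w)` for all `j`. -/
theorem stmt_1 (n : ℕ) (P : (Fin n → ℂ) → ℂ) (hP : IsMixedPoly P) (w : Fin n → ℂ) :
    IsSingularity P w ↔
      ∃ α : ℂ, ‖α‖ = 1 ∧
        ∀ j : Fin n, (starRingEnd ℂ) (wD P j w) = α * wDbar P j w := by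
  simp_rw [isSingularity_iff_exists_re_mul_fderiv_eq_zero (hP.differentiable w),
    forall_re_mul_apply_eq_zero_iff_single]
  constructor
  · rintro ⟨c, hc, hj⟩
    exact ⟨-c / conj c, norm_eq_one_iff_exists_eq_neg_div_conj.mpr ⟨c, hc, rfl⟩,
      fun j => (conj_half_mul_sub_eq_neg_div_conj_mul_iff hc).mpr (hj j)⟩
  · rintro ⟨α, hα, hj⟩
    obtain ⟨c, hc, rfl⟩ := norm_eq_one_iff_exists_eq_neg_div_conj.mp hα
    exact ⟨c, hc, fun j => (conj_half_mul_sub_eq_neg_div_conj_mul_iff hc).mp (hj j)⟩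

end
end

section
/- Let P be a polar weighted homogeneous mixed polynomial in n variables with weights (p_1,…,p_n) and polar degree d_p. If w ∈ ℂⁿ is a singularity of P, then s∘w = (s^{p_1}w_1,…,s^{p_n}w_n) is also a singularity of P for every s ∈ ℂ with |s| = 1. -/
open Complex

noncomputable section

/-- `P` is polar weighted homogeneous with weights `p` and polar degree `dp`:
`P(s^{p_1}z_1,…,s^{p_n}z_n) = s^{dp}·P(z)` for all `s` on the unit circle. -/
def IsPolarWH {n : ℕ} (P : (Fin n → ℂ) → ℂ) (p : Fin n → ℤ) (dp : ℕ) : Prop :=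
  ∀ s : ℂ, ‖s‖ = 1 → ∀ z : Fin n → ℂ,
    P (fun j => s ^ p j * z j) = s ^ dp * P z

/-- `P` is radial weighted homogeneous with weights `q` and radial degree `dr`:
`P(r^{q_1}z_1,…,r^{q_n}z_n) = r^{dr}·P(z)` for all real `r ≠ 0`. -/
def IsRadialWH {n : ℕ} (P : (Fin n → ℂ) → ℂ) (q : Fin n → ℤ) (dr : ℕ) : Prop :=
  ∀ r : ℝ, r ≠ 0 → ∀ z : Fin n → ℂ,
    P (fun j => (r : ℂ) ^ q j * z j) = (r : ℂ) ^ dr * P z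

/-!
A circle-equivariant `P` satisfies `P ∘ A = u • P` for the ℝ-linear automorphism `A = s ∘ ·`
of `ℂⁿ` and the unit `u = s ^ dp`. By the chain rule `dP_{A w} ∘ A = u · dP_w`, and a
singularity at `w` is a nonzero `c : ℂ` with `Re (c · dP_w) = 0`; then `c u⁻¹` witnesses a
singularity at `A w`. Where `P` is not differentiable one of `Re P`, `Im P` has zero
derivative, so such points are singular for trivial reasons.
-/

section Equivariant

variable {E : Type*} [NormedAddCommGroup E] [NormedSpace ℝ E] {P : E → ℂ} {u : ℂ}

theorem fderiv_apply_of_forall_apply_eq_mul (A : E ≃L[ℝ] E) (h : ∀ z, P (A z) = u * P z)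
    (x v : E) : fderiv ℝ P (A x) (A v) = u * fderiv ℝ P x v := by
  have hchain := A.comp_right_fderiv (f := P) (x := x)
  rw [show P ∘ A = u • P from funext h, fderiv_const_smul_field] at hchain
  exact (DFunLike.congr_fun hchain v).symm

theorem differentiableAt_of_forall_apply_eq_mul (hu : u ≠ 0) (A : E ≃L[ℝ] E)
    (h : ∀ z, P (A z) = u * P z) {x : E} (hd : DifferentiableAt ℝ P (A x)) :
    DifferentiableAt ℝ P x := by
  have hP : P = fun z => u⁻¹ * P (A z) := funext fun z => by rw [h, inv_mul_cancel_left₀ hu]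
  rw [hP]
  exact (hd.comp x A.differentiableAt).const_mul _

end Equivariant

theorem isSingularity_of_not_differentiableAt {n : ℕ} {P : (Fin n → ℂ) → ℂ} {x : Fin n → ℂ}
    (hd : ¬DifferentiableAt ℝ P x) : IsSingularity P x := by
  have hreim : ¬(DifferentiableAt ℝ (fun z => (P z).re) x ∧
      DifferentiableAt ℝ (fun z => (P z).im) x) := fun ⟨hre, him⟩ =>
    hd (equivRealProdCLM.comp_differentiableAt_iff.mp (hre.prodMk him))
  rcases not_and_or.mp hreim with hre | him
  · exact ⟨1, 0, by simp, by simp [fderiv_zero_of_not_differentiableAt hre]⟩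
  · exact ⟨0, 1, by simp, by simp [fderiv_zero_of_not_differentiableAt him]⟩

theorem isSingularity_iff_exists_re_mul_fderiv {n : ℕ} {P : (Fin n → ℂ) → ℂ} {x : Fin n → ℂ}
    (hd : DifferentiableAt ℝ P x) :
    IsSingularity P x ↔ ∃ c : ℂ, c ≠ 0 ∧ ∀ v, (c * fderiv ℝ P x v).re = 0 := by
  have hre : fderiv ℝ (fun z => (P z).re) x = reCLM.comp (fderiv ℝ P x) :=
    (reCLM.hasFDerivAt.comp x hd.hasFDerivAt).fderiv
  have him : fderiv ℝ (fun z => (P z).im) x = imCLM.comp (fderiv ℝ P x) :=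
    (imCLM.hasFDerivAt.comp x hd.hasFDerivAt).fderiv
  have hcomb : ∀ a b : ℝ, a • fderiv ℝ (fun z => (P z).re) x +
      b • fderiv ℝ (fun z => (P z).im) x = 0 ↔ ∀ v, (⟨a, -b⟩ * fderiv ℝ P x v).re = 0 := by
    intro a b
    simp [hre, him, ContinuousLinearMap.ext_iff, mul_re]
  constructor
  · rintro ⟨a, b, hab, hsum⟩
    exact ⟨⟨a, -b⟩, fun h => hab ⟨congrArg re h, by simpa using congrArg im h⟩,
      (hcomb a b).mp hsum⟩
  · rintro ⟨c, hc, hcL⟩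
    refine ⟨c.re, -c.im, fun h => hc (Complex.ext h.1 (by simpa using h.2)), ?_⟩
    exact (hcomb _ _).mpr (by simpa using hcL)

theorem IsSingularity.apply_of_forall_apply_eq_mul {n : ℕ} {P : (Fin n → ℂ) → ℂ} {u : ℂ}
    (hu : u ≠ 0) (A : (Fin n → ℂ) ≃L[ℝ] (Fin n → ℂ)) (h : ∀ z, P (A z) = u * P z)
    {x : Fin n → ℂ} (hx : IsSingularity P x) : IsSingularity P (A x) := by
  by_cases hd : DifferentiableAt ℝ P (A x)
  · obtain ⟨c, hc, hcL⟩ := (isSingularity_iff_exists_re_mul_fderiv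
      (differentiableAt_of_forall_apply_eq_mul hu A h hd)).mp hx
    refine (isSingularity_iff_exists_re_mul_fderiv hd).mpr
      ⟨c * u⁻¹, mul_ne_zero hc (inv_ne_zero hu), fun v => ?_⟩
    rw [← A.apply_symm_apply v, fderiv_apply_of_forall_apply_eq_mul A h, mul_assoc,
      inv_mul_cancel_left₀ hu]
    exact hcL _
  · exact isSingularity_of_not_differentiableAt hd

def weightedSMul {n : ℕ} (s : ℂˣ) (p : Fin n → ℤ) : (Fin n → ℂ) ≃L[ℝ] (Fin n → ℂ) :=
  ContinuousLinearEquiv.piCongrRight fun j => ContinuousLinearEquiv.smulLeft (s ^ p j)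

theorem weightedSMul_apply {n : ℕ} (s : ℂˣ) (p : Fin n → ℤ) (z : Fin n → ℂ) :
    weightedSMul s p z = fun j => (s : ℂ) ^ p j * z j := by
  ext j
  change (s ^ p j) • z j = _
  rw [Units.smul_def, Units.val_zpow_eq_zpow_val, smul_eq_mul]

theorem stmt_3_general (n : ℕ) (P : (Fin n → ℂ) → ℂ)
    (p : Fin n → ℤ)
    (dp : ℕ) (hpolar : IsPolarWH P p dp)
    (w : Fin n → ℂ) (hw : IsSingularity P w) :
    ∀ s : ℂ, ‖s‖ = 1 → IsSingularity P (fun j => s ^ p j * w j) := by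
  intro s hs
  have hs0 : s ≠ 0 := norm_ne_zero_iff.mp (by rw [hs]; exact one_ne_zero)
  have hequiv : ∀ z, P (weightedSMul (Units.mk0 s hs0) p z) = s ^ dp * P z := fun z => by
    rw [weightedSMul_apply]
    exact hpolar s hs z
  simpa [weightedSMul_apply] using
    hw.apply_of_forall_apply_eq_mul (pow_ne_zero dp hs0) _ hequiv

/-- The singularities of a polar weighted homogeneous mixed polynomial are invariant
under the circle action. -/
theorem stmt_3 (n : ℕ) (P : (Fin n → ℂ) → ℂ) (hP : IsMixedPoly P)
    (p : Fin n → ℤ) (hgcd : Finset.univ.gcd p = 1)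
    (dp : ℕ) (hdp : 0 < dp) (hpolar : IsPolarWH P p dp)
    (w : Fin n → ℂ) (hw : IsSingularity P w) :
    ∀ s : ℂ, ‖s‖ = 1 → IsSingularity P (fun j => s ^ p j * w j) :=
  stmt_3_general n P p dp hpolar w hw

end
end

section
/- Let P be a mixed polynomial in n variables and w ∈ ℂⁿ a point at which the mixed Hessian H(P)(w) has rank 2n. Then there exists u₀ ∈ ℝ such that det(H_ℝ(Re P)(w) + u₀·H_ℝ(Im P)(w)) ≠ 0, i.e. the real Hessian at w of the function Re P + u₀·Im P : ℝ^{2n} → ℝ (the imaginary part of P after the linear change of coordinates (w_1,w_2) ↦ (w_1, w_1 + u₀w_2) on the target ℝ²) is nonsingular. -/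
open Complex

noncomputable section

/-- The mixed Hessian `H(P)` of a mixed polynomial, a `2n × 2n` matrix (indexed by
`Fin n ⊕ Fin n`) with block form
`[[∂²P/∂z_j∂z_k, ∂²P/∂z_j∂z̄_k], [∂²P/∂z̄_j∂z_k, ∂²P/∂z̄_j∂z̄_k]]`. -/
def mixedHessian {n : ℕ} (P : (Fin n → ℂ) → ℂ) (w : Fin n → ℂ) :
    Matrix (Fin n ⊕ Fin n) (Fin n ⊕ Fin n) ℂ :=
  Matrix.of fun a b =>
    match a, b with
    | Sum.inl j, Sum.inl k => wD (fun z => wD P k z) j w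
    | Sum.inl j, Sum.inr k => wD (fun z => wDbar P k z) j w
    | Sum.inr j, Sum.inl k => wDbar (fun z => wD P k z) j w
    | Sum.inr j, Sum.inr k => wDbar (fun z => wDbar P k z) j w

/-- The real coordinate directions of `ℂⁿ ≅ ℝ^{2n}`: `inl j ↦ x_j`-direction,
`inr j ↦ y_j`-direction. -/
def dirC {n : ℕ} : (Fin n ⊕ Fin n) → (Fin n → ℂ)
  | Sum.inl j => Pi.single j 1
  | Sum.inr j => Pi.single j Complex.I

/-- The real Hessian `H_ℝ(η)` of `η : ℂⁿ ≅ ℝ^{2n} → ℝ` in the coordinates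
`(x_1,…,x_n,y_1,…,y_n)`. -/
def realHessian {n : ℕ} (η : (Fin n → ℂ) → ℝ) (w : Fin n → ℂ) :
    Matrix (Fin n ⊕ Fin n) (Fin n ⊕ Fin n) ℝ :=
  Matrix.of fun a b => fderiv ℝ (fun z => fderiv ℝ η z (dirC b)) w (dirC a)

/-!
Write `C` for the matrix of second real derivatives of `P` at `w` in the directions
`∂/∂x_j, ∂/∂y_j`. Since `∂/∂z_j` and `∂/∂z̄_j` are fixed linear combinations of these, the mixed
Hessian factors as `T C Tᵀ`, so full rank of `H(P)(w)` forces `det C ≠ 0`. Splitting `C` into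
real and imaginary parts gives `C = H_ℝ(Re P)(w) + i H_ℝ(Im P)(w)`. If `det (H_ℝ(Re P)(w) +
u H_ℝ(Im P)(w))` vanished for every real `u`, this real polynomial in `u` would be zero, and so
would its value `det C` at `u = i`.
-/

open Matrix Polynomial

theorem Matrix.det_ne_zero_of_rank_eq_card {K m : Type*} [Field K] [Fintype m] [DecidableEq m]
    {A : Matrix m m K} (h : A.rank = Fintype.card m) : A.det ≠ 0 := by
  have hA : LinearIndependent K A.col := linearIndependent_iff_card_eq_finrank_span.mpr <| by
    rw [Set.finrank, ← rank_eq_finrank_span_cols, h]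
  exact (isUnit_iff_isUnit_det A).mp (linearIndependent_cols_iff_isUnit.mp hA) |>.ne_zero

theorem Matrix.exists_det_add_smul_ne_zero {R S m : Type*} [CommRing R] [IsDomain R] [Infinite R]
    [CommRing S] [Algebra R S] [Fintype m] [DecidableEq m] (A B : Matrix m m R) (s : S)
    (h : (A.map (algebraMap R S) + s • B.map (algebraMap R S)).det ≠ 0) :
    ∃ u : R, (A + u • B).det ≠ 0 := by
  -- `det (A + X • B)` vanishes on the infinite domain `R`, hence is `0`, hence vanishes at `s`.
  by_contra! hA
  set p : R[X] := (A.map C + (X : R[X]) • B.map C).det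
  have hp : p = 0 := Polynomial.funext fun u => by
    rw [eval_zero, ← hA u, ← coe_evalRingHom, RingHom.map_det]
    congr 1
    ext
    simp only [RingHom.mapMatrix_apply, map_apply, add_apply, smul_apply, smul_eq_mul,
      coe_evalRingHom, eval_add, eval_mul, eval_C, eval_X]
  have hs : aeval s p = (A.map (algebraMap R S) + s • B.map (algebraMap R S)).det := by
    rw [AlgHom.map_det]
    congr 1
    ext
    simp only [AlgHom.mapMatrix_apply, map_apply, add_apply, smul_apply, smul_eq_mul, map_add,
      map_mul, aeval_C, aeval_X]
  rw [← hs, hp, map_zero] at h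
  exact h rfl

theorem IsMixedPoly.contDiff {n : ℕ} {P : (Fin n → ℂ) → ℂ} (hP : IsMixedPoly P)
    {k : WithTop ℕ∞} : ContDiff ℝ k P := by
  obtain ⟨c, hc⟩ := hP
  have hconj : ContDiff ℝ k (starRingEnd ℂ) := conjCLE.contDiff
  rw [funext hc]
  unfold Finsupp.sum
  fun_prop

section SecondDerivative

variable {E F G : Type*} [NormedAddCommGroup E] [NormedSpace ℝ E] [NormedAddCommGroup F]
  [NormedSpace ℝ F] [NormedAddCommGroup G] [NormedSpace ℝ G]

theorem fderiv_clm_comp_fderiv_apply {f : E → F} (hf : ContDiff ℝ 2 f)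
    (L : (E →L[ℝ] F) →L[ℝ] G) (x u : E) :
    fderiv ℝ (fun y => L (fderiv ℝ f y)) x u = L (fderiv ℝ (fderiv ℝ f) x u) := by
  have hdf : Differentiable ℝ (fderiv ℝ f) :=
    (hf.fderiv_right (m := 1) (by norm_num)).differentiable (by norm_num)
  change fderiv ℝ (L ∘ fderiv ℝ f) x u = _
  rw [(L.hasFDerivAt.comp x (hdf x).hasFDerivAt).fderiv]
  rfl

theorem fderiv_clm_comp_eq {f : E → F} (hf : Differentiable ℝ f) (φ : F →L[ℝ] G) :
    fderiv ℝ (fun z => φ (f z)) = fun y => φ.comp (fderiv ℝ f y) :=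
  funext fun y => (φ.hasFDerivAt.comp y (hf y).hasFDerivAt).fderiv

end SecondDerivative

section Wirtinger

variable {n : ℕ}

def secondDerivMatrix (P : (Fin n → ℂ) → ℂ) (w : Fin n → ℂ) :
    Matrix (Fin n ⊕ Fin n) (Fin n ⊕ Fin n) ℂ :=
  Matrix.of fun a b => fderiv ℝ (fderiv ℝ P) w (dirC a) (dirC b)

theorem realHessian_clm_comp {P : (Fin n → ℂ) → ℂ} (hP : ContDiff ℝ 2 P) (φ : ℂ →L[ℝ] ℝ)
    (w : Fin n → ℂ) : realHessian (fun z => φ (P z)) w = (secondDerivMatrix P w).map φ := by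
  ext a b
  rw [realHessian, of_apply, fderiv_clm_comp_eq (hP.differentiable (by norm_num))]
  exact fderiv_clm_comp_fderiv_apply hP (φ.comp (ContinuousLinearMap.apply ℝ ℂ (dirC b))) w _

theorem secondDerivMatrix_eq_realHessian {P : (Fin n → ℂ) → ℂ} (hP : ContDiff ℝ 2 P)
    (w : Fin n → ℂ) :
    secondDerivMatrix P w = (realHessian (fun z => (P z).re) w).map (algebraMap ℝ ℂ) +
      I • (realHessian (fun z => (P z).im) w).map (algebraMap ℝ ℂ) := by
  rw [show (fun z => (P z).re) = fun z => reCLM (P z) from rfl,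
    show (fun z => (P z).im) = fun z => imCLM (P z) from rfl,
    realHessian_clm_comp hP, realHessian_clm_comp hP]
  ext a b
  simp [mul_comm I, re_add_im]

def wirtinger (s : ℂ) (Q : (Fin n → ℂ) → ℂ) (j : Fin n) (w : Fin n → ℂ) : ℂ :=
  2⁻¹ * (fderiv ℝ Q w (dirC (.inl j)) + s * fderiv ℝ Q w (dirC (.inr j)))

theorem wD_eq_wirtinger (Q : (Fin n → ℂ) → ℂ) (j : Fin n) : wD Q j = wirtinger (-I) Q j := by
  ext w
  simp only [wD, wirtinger, dirC]
  ring

theorem wDbar_eq_wirtinger (Q : (Fin n → ℂ) → ℂ) (j : Fin n) : wDbar Q j = wirtinger I Q j := by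
  ext w
  simp only [wDbar, wirtinger, dirC]
  ring

theorem wirtinger_wirtinger {P : (Fin n → ℂ) → ℂ} (hP : ContDiff ℝ 2 P) (s t : ℂ) (j k : Fin n)
    (w : Fin n → ℂ) :
    wirtinger s (wirtinger t P k) j w =
      4⁻¹ * (secondDerivMatrix P w (.inl j) (.inl k) +
        t * secondDerivMatrix P w (.inl j) (.inr k) + s * secondDerivMatrix P w (.inr j) (.inl k) +
        s * t * secondDerivMatrix P w (.inr j) (.inr k)) := by
  let L : ((Fin n → ℂ) →L[ℝ] ℂ) →L[ℝ] ℂ := (2⁻¹ : ℂ) •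
    (ContinuousLinearMap.apply ℝ ℂ (dirC (.inl k)) +
      t • ContinuousLinearMap.apply ℝ ℂ (dirC (.inr k)))
  have hL : wirtinger t P k = fun z => L (fderiv ℝ P z) := rfl
  simp only [wirtinger, hL, fderiv_clm_comp_fderiv_apply hP]
  simp [L, secondDerivMatrix]
  ring

/-- Expresses `(∂/∂z_j, ∂/∂z̄_j)` in terms of `(∂/∂x_j, ∂/∂y_j)`. -/
def wirtingerChange (n : ℕ) : Matrix (Fin n ⊕ Fin n) (Fin n ⊕ Fin n) ℂ :=
  (2⁻¹ : ℂ) • Matrix.fromBlocks 1 (-I • 1) 1 (I • 1)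

theorem mixedHessian_eq_mul_secondDerivMatrix_mul {P : (Fin n → ℂ) → ℂ} (hP : ContDiff ℝ 2 P)
    (w : Fin n → ℂ) :
    mixedHessian P w = wirtingerChange n * secondDerivMatrix P w * (wirtingerChange n)ᵀ := by
  ext (j | j) (k | k) <;>
    simp [mixedHessian, wD_eq_wirtinger, wDbar_eq_wirtinger, wirtinger_wirtinger hP,
      wirtingerChange, mul_apply, Fintype.sum_sum_type, one_apply] <;>
    ring_nf <;> simp only [I_sq] <;> ring

end Wirtinger

/-- If the mixed Hessian of `P` at `w` has full rank `2n`, then some real linear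
combination `H_ℝ(Re P)(w) + u₀·H_ℝ(Im P)(w)` is nonsingular. -/
theorem stmt_7 (n : ℕ) (P : (Fin n → ℂ) → ℂ) (hP : IsMixedPoly P) (w : Fin n → ℂ)
    (hrank : (mixedHessian P w).rank = 2 * n) :
    ∃ u₀ : ℝ,
      (realHessian (fun z => (P z).re) w +
        u₀ • realHessian (fun z => (P z).im) w).det ≠ 0 := by
  have hP2 : ContDiff ℝ 2 P := hP.contDiff
  have hrank_le : (mixedHessian P w).rank ≤ (secondDerivMatrix P w).rank := by
    rw [mixedHessian_eq_mul_secondDerivMatrix_mul hP2]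
    exact (rank_mul_le_left _ _).trans (rank_mul_le_right _ _)
  have hdet : (secondDerivMatrix P w).det ≠ 0 := by
    refine det_ne_zero_of_rank_eq_card (le_antisymm (rank_le_card_width _) ?_)
    rw [Fintype.card_sum, Fintype.card_fin, ← two_mul, ← hrank]
    exact hrank_le
  rw [secondDerivMatrix_eq_realHessian hP2] at hdet
  exact exists_det_add_smul_ne_zero _ _ _ hdet

end
end

section
/- Let p, q, n be positive integers with q ≥ p and let g ∈ ℂ[z_1,z_2] be a convenient weighted homogeneous complex polynomial (g(c^q z_1, c^p z_2) = c^{pqn}·g(z_1,z_2) for all c ∈ ℂ∖{0}) with an isolated singularity at the origin. Suppose g is not of the form β_1 z_1 + β_2 z_2^k. Then det H_ℂ(g) := (∂²g/∂z_1∂z_1)·(∂²g/∂z_2∂z_2) − (∂²g/∂z_1∂z_2)·(∂²g/∂z_2∂z_1) is not the zero polynomial. -/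
/-!
Put `d = pqn` and let `g₁, g₂` be the first partials of `g`; they are weighted homogeneous of
weights `d - q` and `d - p` for the weights `(q, p)`. If `pn = 1`, the only monomials of weight `q`
are `z₁` and `z₂ ^ q`, so `g` has the excluded form. Otherwise suppose the Hessian vanishes.

If `g₁` and `g₂` have a non-unit common factor `h`, then `h` is weighted homogeneous (the extreme
weight components of a product are the products of the extreme weight components) of positive
weight, so it has a zero `z ≠ 0`, and the curve `t ↦ (t ^ q z₁, t ^ p z₂)` consists of common zeros
of `g₁, g₂` accumulating at the origin: the singularity is not isolated.

If `g₁` and `g₂` are coprime, Euler's identities for `g₁` and `g₂` together with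
`g₁₁ g₂₂ = g₁₂ ^ 2` give `(d - q) g₁ g₁₂ = (d - p) g₂ g₁₁`. Hence `g₁ ∣ g₁₁`, which has smaller
weight, so `g₁₁ = 0`, then `g₁₂ = 0`, and Euler's identity `q z₁ g₁₁ + p z₂ g₁₂ = (d - q) g₁`
forces `g₁ = 0`.
-/

open MvPolynomial

theorem Finsupp.weight_fin_two (w : Fin 2 → ℕ) (d : Fin 2 →₀ ℕ) :
    weight w d = d 0 * w 0 + d 1 * w 1 := by
  rw [weight_apply, Finsupp.sum_fintype _ _ (by simp), Fin.sum_univ_two, smul_eq_mul, smul_eq_mul]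

namespace MvPolynomial

open Finsupp

variable {R σ M : Type*}

theorem pderiv_pderiv_comm [CommSemiring R] (i j : σ) (f : MvPolynomial σ R) :
    pderiv i (pderiv j f) = pderiv j (pderiv i f) := by
  classical
  obtain rfl | hij := eq_or_ne i j
  · rfl
  ext m
  simp only [coeff_pderiv, add_right_comm m (single i 1), Finsupp.add_apply,
    single_eq_of_ne hij, single_eq_of_ne hij.symm, add_zero]
  ring

theorem pderiv_ne_zero_of_coeff_ne_zero [CommRing R] [IsDomain R] [CharZero R]
    {f : MvPolynomial σ R} {d : σ →₀ ℕ} {i : σ} (hd : coeff d f ≠ 0) (hi : d i ≠ 0) :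
    pderiv i f ≠ 0 := by
  refine ne_zero_iff.mpr ⟨d - single i 1, ?_⟩
  rw [coeff_pderiv, tsub_add_cancel_of_le (single_le_iff.mpr (Nat.one_le_iff_ne_zero.mpr hi))]
  exact mul_ne_zero hd (Nat.cast_add_one_ne_zero _)

section WeightedHomogeneousDivisors

variable [AddCommMonoid M] [LinearOrder M] [IsOrderedCancelAddMonoid M] {w : σ → M}

theorem weightedHomogeneousComponent_add_mul_of_forall_le [CommSemiring R]
    {f u : MvPolynomial σ R} {a b : M} (hf : ∀ d, coeff d f ≠ 0 → weight w d ≤ a)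
    (hu : ∀ d, coeff d u ≠ 0 → weight w d ≤ b) :
    weightedHomogeneousComponent w (a + b) (f * u) =
      weightedHomogeneousComponent w a f * weightedHomogeneousComponent w b u := by
  classical
  ext n
  simp only [coeff_weightedHomogeneousComponent, coeff_mul]
  split_ifs with hn
  · refine Finset.sum_congr rfl fun x hx => ?_
    rw [Finset.HasAntidiagonal.mem_antidiagonal] at hx
    by_cases h₁ : coeff x.1 f = 0
    · simp [h₁]
    by_cases h₂ : coeff x.2 u = 0
    · simp [h₂]
    have hx' : weight w x.1 + weight w x.2 = a + b := by rw [← map_add, hx, hn]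
    obtain ⟨ha, hb⟩ := (add_eq_add_iff_eq_and_eq (hf _ h₁) (hu _ h₂)).mp hx'
    simp [ha, hb]
  · refine (Finset.sum_eq_zero fun x hx => ?_).symm
    rw [Finset.HasAntidiagonal.mem_antidiagonal] at hx
    split_ifs with ha hb
    · exact absurd (by rw [← hx, map_add, ha, hb]) hn
    all_goals simp

variable [CommRing R] [IsDomain R]

theorem IsWeightedHomogeneous.weight_add_weight_eq_of_mul {f u : MvPolynomial σ R} {e : M}
    (h : IsWeightedHomogeneous w (f * u) e) {d₀ d₁ : σ →₀ ℕ}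
    (hd₀ : coeff d₀ f ≠ 0) (hf : ∀ d, coeff d f ≠ 0 → weight w d ≤ weight w d₀)
    (hd₁ : coeff d₁ u ≠ 0) (hu : ∀ d, coeff d u ≠ 0 → weight w d ≤ weight w d₁) :
    weight w d₀ + weight w d₁ = e := by
  classical
  have hcomp {g : MvPolynomial σ R} {d : σ →₀ ℕ} (hd : coeff d g ≠ 0) :
      weightedHomogeneousComponent w (weight w d) g ≠ 0 :=
    ne_zero_iff.mpr ⟨d, by rwa [coeff_weightedHomogeneousComponent, if_pos rfl]⟩
  by_contra hne
  apply mul_ne_zero (hcomp hd₀) (hcomp hd₁)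
  rw [← weightedHomogeneousComponent_add_mul_of_forall_le hf hu]
  exact h.weightedHomogeneousComponent_ne _ hne

theorem IsWeightedHomogeneous.exists_of_dvd {f g : MvPolynomial σ R} {e : M}
    (hg : IsWeightedHomogeneous w g e) (hg₀ : g ≠ 0) (hfg : f ∣ g) :
    ∃ a, IsWeightedHomogeneous w f a := by
  obtain ⟨u, rfl⟩ := hfg
  have hf₀ : f.support.Nonempty := support_nonempty.mpr (left_ne_zero_of_mul hg₀)
  have hu₀ : u.support.Nonempty := support_nonempty.mpr (right_ne_zero_of_mul hg₀)
  obtain ⟨d₀, hd₀, hfmax⟩ := f.support.exists_max_image (weight w) hf₀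
  obtain ⟨d₁, hd₁, humax⟩ := u.support.exists_max_image (weight w) hu₀
  obtain ⟨d₀', hd₀', hfmin⟩ := f.support.exists_min_image (weight w) hf₀
  obtain ⟨d₁', hd₁', humin⟩ := u.support.exists_min_image (weight w) hu₀
  simp only [mem_support_iff] at hd₀ hd₁ hd₀' hd₁' hfmax humax hfmin humin
  have hmax := hg.weight_add_weight_eq_of_mul hd₀ hfmax hd₁ humax
  -- the minimal weights are the maximal ones for the reversed order on `M`
  have hg' : IsWeightedHomogeneous (OrderDual.toDual ∘ w : σ → Mᵒᵈ) (f * u)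
    (OrderDual.toDual e) := hg
  have hmin := hg'.weight_add_weight_eq_of_mul hd₀' hfmin hd₁' humin
  obtain ⟨hf_eq, -⟩ := (add_eq_add_iff_eq_and_eq (hfmin d₀ hd₀) (humin d₁ hd₁)).mp
    (hmin.trans hmax.symm)
  exact ⟨weight w d₀, fun d hd => le_antisymm (hfmax d hd) (hf_eq ▸ hfmin d hd)⟩

theorem IsWeightedHomogeneous.le_of_dvd {w : σ → ℕ} {f g : MvPolynomial σ R} {a b : ℕ}
    (hf : IsWeightedHomogeneous w f a) (hg : IsWeightedHomogeneous w g b) (hg₀ : g ≠ 0)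
    (hfg : f ∣ g) : a ≤ b := by
  obtain ⟨u, rfl⟩ := hfg
  obtain ⟨c, hu⟩ := hg.exists_of_dvd hg₀ (dvd_mul_left u f)
  rw [hg.inj_right hg₀ (hf.mul hu)]
  exact Nat.le_add_right a c

end WeightedHomogeneousDivisors

theorem IsWeightedHomogeneous.eq_C_of_zero [CommSemiring R] {w : σ → ℕ} (hw : ∀ i, w i ≠ 0)
    {f : MvPolynomial σ R} (hf : IsWeightedHomogeneous w f 0) : f = C (coeff 0 f) :=
  hf.weightedHomogeneousComponent_same.symm.trans (weightedHomogeneousComponent_zero f hw)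

section Eval

open Filter Topology

variable [Fintype σ] {w : σ → ℕ}

theorem prod_weight_mul_pow [CommSemiring R] (c : R) (z : σ → R) (d : σ →₀ ℕ) :
    ∏ i, (c ^ w i * z i) ^ d i = c ^ weight w d * ∏ i, z i ^ d i := by
  rw [weight_apply, Finsupp.sum_fintype _ _ (by simp),
    ← Finset.prod_pow_eq_pow_sum, ← Finset.prod_mul_distrib]
  refine Finset.prod_congr rfl fun i _ => ?_
  rw [mul_pow, ← pow_mul, smul_eq_mul, mul_comm (d i)]

theorem eval_weight_mul [CommSemiring R] (c : R) (z : σ → R) (f : MvPolynomial σ R) :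
    eval (fun i => c ^ w i * z i) f =
      ∑ d ∈ f.support, c ^ weight w d * (coeff d f * ∏ i, z i ^ d i) := by
  rw [eval_eq']
  refine Finset.sum_congr rfl fun d _ => ?_
  rw [prod_weight_mul_pow, mul_left_comm]

theorem IsWeightedHomogeneous.eval_weight_mul [CommSemiring R] {f : MvPolynomial σ R} {e : ℕ}
    (hf : IsWeightedHomogeneous w f e) (c : R) (z : σ → R) :
    eval (fun i => c ^ w i * z i) f = c ^ e * eval z f := by
  rw [MvPolynomial.eval_weight_mul, eval_eq', Finset.mul_sum]
  exact Finset.sum_congr rfl fun d hd => by rw [hf (mem_support_iff.mp hd)]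

theorem isWeightedHomogeneous_of_eval_weight_mul [CommRing R] [IsDomain R] [Infinite R]
    {f : MvPolynomial σ R} {e : ℕ} {c : R} (hc : Function.Injective (c ^ · : ℕ → R))
    (h : ∀ z : σ → R, eval (fun i => c ^ w i * z i) f = c ^ e * eval z f) :
    IsWeightedHomogeneous w f e := by
  classical
  set D := ∑ d ∈ f.support, monomial d ((c ^ weight w d - c ^ e) * coeff d f)
  have hD : D = 0 := MvPolynomial.funext fun z => by
    have hz := h z
    rw [eval_weight_mul, eval_eq', Finset.mul_sum] at hz
    simp only [D, map_sum, eval_monomial, Finsupp.prod_fintype _ _ (fun _ => pow_zero _),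
      map_zero]
    rw [← sub_eq_zero.mpr hz, ← Finset.sum_sub_distrib]
    exact Finset.sum_congr rfl fun d _ => by ring
  intro d hd
  have hcoeff : coeff d D = (c ^ weight w d - c ^ e) * coeff d f := by
    simp only [D, coeff_sum, coeff_monomial, Finset.sum_ite_eq', mem_support_iff, ite_not]
    split_ifs with h0 <;> simp [h0]
  rw [hD, coeff_zero, eq_comm, mul_eq_zero, sub_eq_zero] at hcoeff
  exact hc (hcoeff.resolve_right hd)

theorem IsWeightedHomogeneous.exists_ne_zero_norm_lt_eval_eq_zero {𝕜 : Type*}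
    [NontriviallyNormedField 𝕜] (hw : ∀ i, w i ≠ 0) {f : MvPolynomial σ 𝕜} {e : ℕ}
    (hf : IsWeightedHomogeneous w f e) {z : σ → 𝕜} (hz : z ≠ 0) (hfz : eval z f = 0)
    {ε : ℝ} (hε : 0 < ε) : ∃ z' ≠ 0, ‖z'‖ < ε ∧ eval z' f = 0 := by
  set γ : 𝕜 → σ → 𝕜 := fun t i => t ^ w i * z i
  have hγ : Tendsto γ (𝓝[≠] 0) (𝓝 0) := by
    have hγ₀ : γ 0 = 0 := by ext i; simp [γ, hw i]
    exact hγ₀ ▸ ((continuous_pi fun i => by fun_prop).tendsto 0).mono_left nhdsWithin_le_nhds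
  obtain ⟨t, htε, ht⟩ :=
    ((hγ.eventually (Metric.ball_mem_nhds 0 hε)).and self_mem_nhdsWithin).exists
  obtain ⟨i, hi⟩ := Function.ne_iff.mp hz
  refine ⟨γ t, Function.ne_iff.mpr ⟨i, mul_ne_zero (pow_ne_zero _ ht) hi⟩,
    mem_ball_zero_iff.mp htε, ?_⟩
  rw [hf.eval_weight_mul, hfz, mul_zero]

end Eval

section FinTwo

theorem IsWeightedHomogeneous.exists_ne_zero_eval_eq_zero {K : Type*} [Field K] [IsAlgClosed K]
    {w : Fin 2 → ℕ} (hw : w 1 ≠ 0) {f : MvPolynomial (Fin 2) K} {e : ℕ}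
    (hf : IsWeightedHomogeneous w f e) (he : e ≠ 0) : ∃ z ≠ 0, eval z f = 0 := by
  classical
  by_cases h₀ : ∀ d ∈ f.support, d 1 ≠ 0
  · refine ⟨![1, 0], by simp, ?_⟩
    rw [eval_eq']
    exact Finset.sum_eq_zero fun d hd => by simp [zero_pow (h₀ d hd)]
  obtain ⟨d₀, hd₀, hd₀1⟩ : ∃ d ∈ f.support, d 1 = 0 := by simpa using h₀
  have hweight {d : Fin 2 →₀ ℕ} (hd : d ∈ f.support) : d 0 * w 0 + d 1 * w 1 = e := by
    rw [← Finsupp.weight_fin_two, hf (mem_support_iff.mp hd)]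
  have hd₀0 : d₀ 0 ≠ 0 := by
    have := hweight hd₀
    rw [hd₀1, zero_mul, add_zero] at this
    exact left_ne_zero_of_mul (this ▸ he)
  set P : Polynomial K := ∑ d ∈ f.support, Polynomial.monomial (d 0) (coeff d f)
  have hP : ∀ a, P.eval a = eval ![a, 1] f := fun a => by
    simp [P, Polynomial.eval_finsetSum, eval_eq', Fin.prod_univ_two]
  -- on the support of `f`, a monomial is determined by its exponent of `X 0`
  have hPcoeff : P.coeff (d₀ 0) = coeff d₀ f := by
    rw [Polynomial.finsetSum_coeff, Finset.sum_eq_single_of_mem d₀ hd₀]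
    · simp
    intro d hd hne
    rw [Polynomial.coeff_monomial, if_neg]
    intro h0
    have h1 : d 1 * w 1 = 0 := by
      have h := hweight hd₀
      rw [hd₀1, ← h0, zero_mul, add_zero, ← hweight hd] at h
      linarith
    have hd1 : d 1 = d₀ 1 := hd₀1 ▸ (mul_eq_zero.mp h1).resolve_right hw
    exact hne (Finsupp.ext (Fin.forall_fin_two.mpr ⟨h0, hd1⟩))
  have hPdeg : P.degree ≠ 0 := fun h => by
    have := Polynomial.le_degree_of_ne_zero (hPcoeff ▸ mem_support_iff.mp hd₀)
    rw [h] at this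
    exact hd₀0 (Nat.le_zero.mp (by exact_mod_cast this))
  obtain ⟨a, ha⟩ := IsAlgClosed.exists_root P hPdeg
  exact ⟨![a, 1], by simp, by rw [← hP]; exact ha⟩

theorem exists_ne_zero_norm_lt_eval_eq_zero_of_not_isRelPrime {𝕜 : Type*}
    [NontriviallyNormedField 𝕜] [IsAlgClosed 𝕜] {w : Fin 2 → ℕ} (hw : ∀ i, w i ≠ 0)
    {f₁ f₂ : MvPolynomial (Fin 2) 𝕜} {e : ℕ} (hf₁ : IsWeightedHomogeneous w f₁ e)
    (hf₁₀ : f₁ ≠ 0) (hrel : ¬IsRelPrime f₁ f₂) {ε : ℝ} (hε : 0 < ε) :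
    ∃ z ≠ 0, ‖z‖ < ε ∧ eval z f₁ = 0 ∧ eval z f₂ = 0 := by
  simp only [IsRelPrime, not_forall] at hrel
  obtain ⟨h, ⟨u₁, rfl⟩, ⟨u₂, rfl⟩, hunit⟩ := hrel
  obtain ⟨j, hj⟩ := hf₁.exists_of_dvd hf₁₀ (dvd_mul_right h u₁)
  have hj₀ : j ≠ 0 := by
    rintro rfl
    rw [hj.eq_C_of_zero hw] at hunit hf₁₀
    exact hunit ((isUnit_iff_ne_zero.mpr fun h0 => hf₁₀ (by simp [h0])).map C)
  obtain ⟨z, hz, hhz⟩ := hj.exists_ne_zero_eval_eq_zero (hw 1) hj₀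
  obtain ⟨z', hz', hz'ε, hhz'⟩ := hj.exists_ne_zero_norm_lt_eval_eq_zero hw hz hhz hε
  exact ⟨z', hz', hz'ε, by simp [hhz'], by simp [hhz']⟩

noncomputable def hessianDet [CommRing R] (g : MvPolynomial (Fin 2) R) :
    MvPolynomial (Fin 2) R :=
  pderiv 0 (pderiv 0 g) * pderiv 1 (pderiv 1 g) - pderiv 0 (pderiv 1 g) * pderiv 1 (pderiv 0 g)

theorem IsWeightedHomogeneous.hessianDet_ne_zero_of_isRelPrime {K : Type*} [Field K]
    [CharZero K] {w : Fin 2 → ℕ} {g : MvPolynomial (Fin 2) K} {d : ℕ}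
    (hg : IsWeightedHomogeneous w g d) (hw₀ : w 0 ≠ 0) (h2w₀ : 2 * w 0 ≤ d) (hw₁ : w 1 < d)
    (hg₁₀ : pderiv 0 g ≠ 0) (hrel : IsRelPrime (pderiv 0 g) (pderiv 1 g)) :
    hessianDet g ≠ 0 := by
  intro hdet
  have hcomm : pderiv 0 (pderiv 1 g) = pderiv 1 (pderiv 0 g) := pderiv_pderiv_comm 0 1 g
  rw [hessianDet, hcomm, sub_eq_zero] at hdet
  set g₁ := pderiv 0 g
  set g₂ := pderiv 1 g
  set g₁₁ := pderiv 0 g₁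
  set g₁₂ := pderiv 1 g₁
  have hg₁ : IsWeightedHomogeneous w g₁ (d - w 0) := hg.pderiv (by omega)
  have hg₂ : IsWeightedHomogeneous w g₂ (d - w 1) := hg.pderiv (by omega)
  have hg₁₁ : IsWeightedHomogeneous w g₁₁ (d - w 0 - w 0) := hg₁.pderiv (by omega)
  have euler₁ : w 0 • (X 0 * g₁₁) + w 1 • (X 1 * g₁₂) = (d - w 0) • g₁ := by
    simpa only [Fin.sum_univ_two] using hg₁.sum_weight_X_mul_pderiv
  have euler₂ : w 0 • (X 0 * g₁₂) + w 1 • (X 1 * pderiv 1 g₂) = (d - w 1) • g₂ := by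
    simpa only [Fin.sum_univ_two, hcomm] using hg₂.sum_weight_X_mul_pderiv
  have key : (d - w 1) • g₁₁ * g₂ = g₁ * ((d - w 0) • g₁₂) := by
    linear_combination g₁₂ * euler₁ - g₁₁ * euler₂ + w 1 • X 1 * hdet
  have hg₁₁_dvd : g₁ ∣ g₁₁ := by
    have h := hrel.dvd_of_dvd_mul_right ⟨_, key⟩
    rwa [nsmul_eq_mul, ← map_natCast C,
      ((isUnit_iff_ne_zero.mpr (Nat.cast_ne_zero.mpr (by omega))).map C).dvd_mul_left] at h
  have hg₁₁₀ : g₁₁ = 0 := by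
    by_contra h
    have := hg₁.le_of_dvd hg₁₁ h hg₁₁_dvd
    omega
  have hg₁₂₀ : g₁₂ = 0 := by
    rw [hg₁₁₀, zero_mul, eq_comm, mul_self_eq_zero] at hdet
    exact hdet
  simp only [hg₁₁₀, hg₁₂₀, mul_zero, smul_zero, add_zero] at euler₁
  exact hg₁₀ ((smul_eq_zero.mp euler₁.symm).resolve_left (by omega))

theorem IsWeightedHomogeneous.eq_C_mul_X_add_C_mul_X_pow [CommSemiring R] {k : ℕ}
    (hk : 0 < k) {f : MvPolynomial (Fin 2) R} (hf : IsWeightedHomogeneous ![k, 1] f k) :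
    f = C (coeff (single 0 1) f) * X 0 + C (coeff (single 1 k) f) * X 1 ^ k := by
  classical
  have hsupp : f.support ⊆ {single 0 1, single 1 k} := fun d hd => by
    have hw := hf (mem_support_iff.mp hd)
    rw [Finsupp.weight_fin_two] at hw
    simp only [Matrix.cons_val_zero, Matrix.cons_val_one, Matrix.cons_val_fin_one, mul_one] at hw
    have hd₀ : d 0 ≤ 1 := by nlinarith
    interval_cases h : d 0
    · simp [Finsupp.ext_iff, Fin.forall_fin_two, h, (by omega : d 1 = k)]
    · simp [Finsupp.ext_iff, Fin.forall_fin_two, h, (by omega : d 1 = 0)]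
  have hne : single (0 : Fin 2) 1 ≠ single 1 k := by simp [Finsupp.ext_iff, Fin.forall_fin_two]
  calc f = ∑ d ∈ f.support, monomial d (coeff d f) := f.as_sum
    _ = ∑ d ∈ {single 0 1, single 1 k}, monomial d (coeff d f) :=
      Finset.sum_subset hsupp fun d _ hd => by rw [notMem_support_iff.mp hd, monomial_zero]
    _ = _ := by
      rw [Finset.sum_pair hne, ← C_mul_X_pow_eq_monomial, ← C_mul_X_pow_eq_monomial, pow_one]

theorem exists_coeff_ne_zero_of_aeval_X_zero_ne_zero [CommSemiring R]
    {f : MvPolynomial (Fin 2) R} (hf : aeval ![Polynomial.X, (0 : Polynomial R)] f ≠ 0) :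
    ∃ d, coeff d f ≠ 0 ∧ d 1 = 0 := by
  by_contra! h
  apply hf
  rw [f.as_sum, map_sum]
  refine Finset.sum_eq_zero fun d hd => ?_
  rw [aeval_monomial, Finsupp.prod_fintype _ _ (fun _ => pow_zero _), Fin.prod_univ_two]
  simp [zero_pow (h d (mem_support_iff.mp hd))]

end FinTwo

end MvPolynomial

theorem stmt_8_general (p q n : ℕ) (hp : 0 < p) (hq : 0 < q) (hn : 0 < n) (hpq : p ≤ q)
    (g : MvPolynomial (Fin 2) ℂ)
    (hconv₁ : MvPolynomial.aeval ![Polynomial.X, (0 : Polynomial ℂ)] g ≠ 0)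
    (hwh : ∀ c : ℂ, c ≠ 0 → ∀ z : Fin 2 → ℂ,
      MvPolynomial.eval ![c ^ q * z 0, c ^ p * z 1] g =
        c ^ (p * q * n) * MvPolynomial.eval z g)
    (hiso : ∃ ε : ℝ, 0 < ε ∧ ∀ z : Fin 2 → ℂ, z ≠ 0 → ‖z‖ < ε →
      ¬(MvPolynomial.eval z (MvPolynomial.pderiv 0 g) = 0 ∧
        MvPolynomial.eval z (MvPolynomial.pderiv 1 g) = 0))
    (hform : ¬ ∃ (β₁ β₂ : ℂ) (k : ℕ),
      g = MvPolynomial.C β₁ * MvPolynomial.X 0 + MvPolynomial.C β₂ * MvPolynomial.X 1 ^ k) :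
    MvPolynomial.pderiv 0 (MvPolynomial.pderiv 0 g) *
        MvPolynomial.pderiv 1 (MvPolynomial.pderiv 1 g) -
      MvPolynomial.pderiv 0 (MvPolynomial.pderiv 1 g) *
        MvPolynomial.pderiv 1 (MvPolynomial.pderiv 0 g) ≠ 0 := by
  have htwo : Function.Injective ((2 : ℂ) ^ · : ℕ → ℂ) := fun a b hab =>
    Nat.pow_right_injective le_rfl (show 2 ^ a = 2 ^ b by simp only at hab; exact_mod_cast hab)
  have hg : IsWeightedHomogeneous ![q, p] g (p * q * n) :=
    isWeightedHomogeneous_of_eval_weight_mul htwo fun z => by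
      rw [← hwh 2 two_ne_zero z]
      congr; ext i; fin_cases i <;> rfl
  obtain ⟨d, hd, hd₁⟩ := exists_coeff_ne_zero_of_aeval_X_zero_ne_zero hconv₁
  have hd₀ : d 0 ≠ 0 := by
    have h := hg hd
    rw [Finsupp.weight_fin_two, hd₁, zero_mul, add_zero] at h
    exact left_ne_zero_of_mul (h ▸ (by positivity : p * q * n ≠ 0))
  have hg₁₀ : pderiv 0 g ≠ 0 := pderiv_ne_zero_of_coeff_ne_zero hd hd₀
  obtain hpn | hpn : p * n = 1 ∨ 2 ≤ p * n := by have := Nat.mul_pos hp hn; omega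
  · obtain ⟨rfl, rfl⟩ := mul_eq_one.mp hpn
    rw [one_mul, mul_one] at hg
    exact absurd ⟨_, _, _, hg.eq_C_mul_X_add_C_mul_X_pow hq⟩ hform
  by_cases hrel : IsRelPrime (pderiv 0 g) (pderiv 1 g)
  · exact hg.hessianDet_ne_zero_of_isRelPrime hq.ne' (by nlinarith : 2 * q ≤ p * q * n)
      (by nlinarith : p < p * q * n) hg₁₀ hrel
  · obtain ⟨ε, hε, hiso⟩ := hiso
    have hw : ∀ i, ![q, p] i ≠ 0 := Fin.forall_fin_two.mpr ⟨hq.ne', hp.ne'⟩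
    have hg₁ : IsWeightedHomogeneous ![q, p] (pderiv 0 g) (p * q * n - q) :=
      hg.pderiv (Nat.sub_add_cancel (by nlinarith))
    obtain ⟨z, hz, hzε, h₁, h₂⟩ :=
      exists_ne_zero_norm_lt_eval_eq_zero_of_not_isRelPrime hw hg₁ hg₁₀ hrel hε
    exact absurd ⟨h₁, h₂⟩ (hiso z hz hzε)

/-- For a convenient weighted homogeneous two-variable complex polynomial `g` with an
isolated singularity at the origin, not of the form `β₁z₁ + β₂z₂^k`, the complex Hessian
determinant `g_{11}·g_{22} − g_{12}·g_{21}` is not the zero polynomial. -/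
theorem stmt_8 (p q n : ℕ) (hp : 0 < p) (hq : 0 < q) (hn : 0 < n) (hpq : p ≤ q)
    (g : MvPolynomial (Fin 2) ℂ)
    (hconv₁ : MvPolynomial.aeval ![Polynomial.X, (0 : Polynomial ℂ)] g ≠ 0)
    (hconv₂ : MvPolynomial.aeval ![(0 : Polynomial ℂ), Polynomial.X] g ≠ 0)
    (hwh : ∀ c : ℂ, c ≠ 0 → ∀ z : Fin 2 → ℂ,
      MvPolynomial.eval ![c ^ q * z 0, c ^ p * z 1] g =
        c ^ (p * q * n) * MvPolynomial.eval z g)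
    (hsing0 : MvPolynomial.eval 0 (MvPolynomial.pderiv 0 g) = 0 ∧
      MvPolynomial.eval 0 (MvPolynomial.pderiv 1 g) = 0)
    (hiso : ∃ ε : ℝ, 0 < ε ∧ ∀ z : Fin 2 → ℂ, z ≠ 0 → ‖z‖ < ε →
      ¬(MvPolynomial.eval z (MvPolynomial.pderiv 0 g) = 0 ∧
        MvPolynomial.eval z (MvPolynomial.pderiv 1 g) = 0))
    (hform : ¬ ∃ (β₁ β₂ : ℂ) (k : ℕ),
      g = MvPolynomial.C β₁ * MvPolynomial.X 0 + MvPolynomial.C β₂ * MvPolynomial.X 1 ^ k) :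
    MvPolynomial.pderiv 0 (MvPolynomial.pderiv 0 g) *
        MvPolynomial.pderiv 1 (MvPolynomial.pderiv 1 g) -
      MvPolynomial.pderiv 0 (MvPolynomial.pderiv 1 g) *
        MvPolynomial.pderiv 1 (MvPolynomial.pderiv 0 g) ≠ 0 :=
  stmt_8_general p q n hp hq hn hpq g hconv₁ hwh hiso hform
end

section
/- In the setting of the weighted homogeneous pair (f,g), let h(z) = γ_1 z_1^{p(m−n)} + γ_2 z_2^{q(m−n)} with γ_1, γ_2 ∈ ℂ∖{0}, assume the zero sets {z ∈ ℂ² : f(z)·g(z) = 0} and {z ∈ ℂ² : h(z) = 0} intersect only at the origin, let t > 0 and F_t = fḡ + t·h. Then: (a) S_2(F_t) ⊆ {0}, i.e. any point at which all Wirtinger derivatives of F_t vanish is the origin; (b) if the origin is not in S_2(F_t), then the origin is a regular point of F_t, i.e. not a singularity of F_t. -/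
/-!
At a point where all Wirtinger derivatives of `F = f ḡ + t h` vanish, `∂F/∂z̄_j = f ∂g/∂z_j`
and `∂F/∂z_j = ḡ ∂f/∂z_j + t ∂h/∂z_j` vanish. Contracting with the weights through Euler's
identity `∑ k_j z_j ∂_j P = deg P · P` for the weighted homogeneous `f`, `g`, `h` gives first
`f g = 0` and then `h = 0`, so the point is the origin. At the origin `f = 0`, so
`∂F/∂z̄_j = 0` there; since `|∂F/∂z_j|² - |∂F/∂z̄_j|²` is the Jacobian determinant of
`(Re F, Im F)` in `(x_j, y_j)`, a nonzero `∂F/∂z_j` makes `Re F` and `Im F` independent.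
-/

open Complex

noncomputable section

open scoped ComplexConjugate Topology

lemma Pi.single_eq_smul_single_one {ι R : Type*} [DecidableEq ι] [Semiring R] (i : ι) (a : R) :
    Pi.single i a = a • Pi.single (M := fun _ => R) i 1 := by
  rw [← Pi.single_smul', smul_eq_mul, mul_one]

section Wirtinger

variable {n : ℕ} {P Q : (Fin n → ℂ) → ℂ} {w : Fin n → ℂ}

lemma wD_add (hP : DifferentiableAt ℝ P w) (hQ : DifferentiableAt ℝ Q w) (j : Fin n) :
    wD (fun z => P z + Q z) j w = wD P j w + wD Q j w := by
  simp only [wD, fderiv_fun_add hP hQ, add_apply]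
  ring

lemma wDbar_add (hP : DifferentiableAt ℝ P w) (hQ : DifferentiableAt ℝ Q w) (j : Fin n) :
    wDbar (fun z => P z + Q z) j w = wDbar P j w + wDbar Q j w := by
  simp only [wDbar, fderiv_fun_add hP hQ, add_apply]
  ring

lemma wD_mul (hP : DifferentiableAt ℝ P w) (hQ : DifferentiableAt ℝ Q w) (j : Fin n) :
    wD (fun z => P z * Q z) j w = P w * wD Q j w + Q w * wD P j w := by
  simp only [wD, fderiv_fun_mul hP hQ, add_apply, smul_apply, smul_eq_mul]
  ring

lemma wDbar_mul (hP : DifferentiableAt ℝ P w) (hQ : DifferentiableAt ℝ Q w) (j : Fin n) :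
    wDbar (fun z => P z * Q z) j w = P w * wDbar Q j w + Q w * wDbar P j w := by
  simp only [wDbar, fderiv_fun_mul hP hQ, add_apply, smul_apply, smul_eq_mul]
  ring

lemma wD_eq_fderiv (hP : DifferentiableAt ℂ P w) (j : Fin n) :
    wD P j w = fderiv ℂ P w (Pi.single j 1) := by
  rw [wD, hP.fderiv_restrictScalars ℝ, ContinuousLinearMap.coe_restrictScalars',
    Pi.single_eq_smul_single_one j I, map_smul, smul_eq_mul]
  linear_combination (-(1 / 2 : ℂ) * fderiv ℂ P w (Pi.single j 1)) * I_sq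

lemma wDbar_eq_zero (hP : DifferentiableAt ℂ P w) (j : Fin n) : wDbar P j w = 0 := by
  rw [wDbar, hP.fderiv_restrictScalars ℝ, ContinuousLinearMap.coe_restrictScalars',
    Pi.single_eq_smul_single_one j I, map_smul, smul_eq_mul]
  linear_combination ((1 / 2 : ℂ) * fderiv ℂ P w (Pi.single j 1)) * I_sq

lemma differentiableAt_conj (hP : DifferentiableAt ℂ P w) :
    DifferentiableAt ℝ (fun z => conj (P z)) w :=
  (hP.restrictScalars ℝ).star

lemma fderiv_conj_apply (hP : DifferentiableAt ℂ P w) (v : Fin n → ℂ) :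
    fderiv ℝ (fun z => conj (P z)) w v = conj (fderiv ℂ P w v) := by
  simp only [← Complex.star_def, fderiv_star, hP.fderiv_restrictScalars ℝ]
  rfl

lemma wD_conj_eq_zero (hP : DifferentiableAt ℂ P w) (j : Fin n) :
    wD (fun z => conj (P z)) j w = 0 := by
  rw [wD, fderiv_conj_apply hP, fderiv_conj_apply hP, Pi.single_eq_smul_single_one j I,
    map_smul, smul_eq_mul, map_mul, conj_I]
  linear_combination ((1 / 2 : ℂ) * conj (fderiv ℂ P w (Pi.single j 1))) * I_sq

lemma wDbar_conj (hP : DifferentiableAt ℂ P w) (j : Fin n) :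
    wDbar (fun z => conj (P z)) j w = conj (fderiv ℂ P w (Pi.single j 1)) := by
  rw [wDbar, fderiv_conj_apply hP, fderiv_conj_apply hP, Pi.single_eq_smul_single_one j I,
    map_smul, smul_eq_mul, map_mul, conj_I]
  linear_combination (-(1 / 2 : ℂ) * conj (fderiv ℂ P w (Pi.single j 1))) * I_sq

lemma normSq_half_sub_normSq_half (α β : ℂ) :
    normSq ((1 / 2) * (α - I * β)) - normSq ((1 / 2) * (α + I * β)) =
      α.re * β.im - α.im * β.re := by
  simp only [normSq_apply, mul_re, mul_im, sub_re, sub_im, add_re, add_im, I_re, I_im]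
  norm_num
  ring

lemma fderiv_re_apply (hP : DifferentiableAt ℝ P w) (v : Fin n → ℂ) :
    fderiv ℝ (fun z => (P z).re) w v = (fderiv ℝ P w v).re := by
  rw [HasFDerivAt.fderiv (f := fun z => (P z).re) (reCLM.hasFDerivAt.comp w hP.hasFDerivAt)]
  rfl

lemma fderiv_im_apply (hP : DifferentiableAt ℝ P w) (v : Fin n → ℂ) :
    fderiv ℝ (fun z => (P z).im) w v = (fderiv ℝ P w v).im := by
  rw [HasFDerivAt.fderiv (f := fun z => (P z).im) (imCLM.hasFDerivAt.comp w hP.hasFDerivAt)]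
  rfl

lemma IsSingularity.normSq_wD_eq (hP : DifferentiableAt ℝ P w) (hs : IsSingularity P w)
    (j : Fin n) : normSq (wD P j w) = normSq (wDbar P j w) := by
  obtain ⟨a, b, hab, hdep⟩ := hs
  have hcomb : ∀ v, a * (fderiv ℝ P w v).re + b * (fderiv ℝ P w v).im = 0 := fun v => by
    simpa [fderiv_re_apply hP, fderiv_im_apply hP] using congrArg (fun L => L v) hdep
  set α := fderiv ℝ P w (Pi.single j 1)
  set β := fderiv ℝ P w (Pi.single j I)
  have hα := hcomb (Pi.single j 1)
  have hβ := hcomb (Pi.single j I)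
  have hdet : α.re * β.im - α.im * β.re = 0 := by
    by_contra hne
    refine hab ⟨(mul_eq_zero.mp ?_).resolve_right hne, (mul_eq_zero.mp ?_).resolve_right hne⟩
    · linear_combination β.im * hα - α.im * hβ
    · linear_combination α.re * hβ - β.re * hα
  rw [← sub_eq_zero, wD, wDbar, normSq_half_sub_normSq_half, hdet]

lemma not_isSingularity_of_wDbar_eq_zero (hP : DifferentiableAt ℝ P w)
    (hbar : ∀ j, wDbar P j w = 0) (hne : ¬ ∀ j, wD P j w = 0 ∧ wDbar P j w = 0) :
    ¬ IsSingularity P w := fun hs => hne fun j => by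
  have hnorm := hs.normSq_wD_eq hP j
  rw [hbar j, map_zero, normSq_eq_zero] at hnorm
  exact ⟨hnorm, hbar j⟩

end Wirtinger

section MixedDeformation

variable {n : ℕ} {A B H : (Fin n → ℂ) → ℂ} {w : Fin n → ℂ}

lemma differentiableAt_mul_conj (hA : DifferentiableAt ℂ A w) (hB : DifferentiableAt ℂ B w) :
    DifferentiableAt ℝ (fun z => A z * conj (B z)) w :=
  (hA.restrictScalars ℝ).fun_mul (differentiableAt_conj hB)

lemma differentiableAt_mul_conj_add_const_mul (hA : DifferentiableAt ℂ A w)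
    (hB : DifferentiableAt ℂ B w) (hH : DifferentiableAt ℂ H w) (c : ℂ) :
    DifferentiableAt ℝ (fun z => A z * conj (B z) + c * H z) w :=
  (differentiableAt_mul_conj hA hB).fun_add ((hH.const_mul c).restrictScalars ℝ)

lemma wD_mul_conj_add_const_mul (hA : DifferentiableAt ℂ A w)
    (hB : DifferentiableAt ℂ B w) (hH : DifferentiableAt ℂ H w) (c : ℂ) (j : Fin n) :
    wD (fun z => A z * conj (B z) + c * H z) j w =
      conj (B w) * fderiv ℂ A w (Pi.single j 1) + c * fderiv ℂ H w (Pi.single j 1) := by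
  rw [wD_add (differentiableAt_mul_conj hA hB) ((hH.const_mul c).restrictScalars ℝ),
    wD_mul (hA.restrictScalars ℝ) (differentiableAt_conj hB), wD_conj_eq_zero hB,
    wD_eq_fderiv hA, wD_eq_fderiv (hH.const_mul c), fderiv_const_mul hH]
  simp

lemma wDbar_mul_conj_add_const_mul (hA : DifferentiableAt ℂ A w)
    (hB : DifferentiableAt ℂ B w) (hH : DifferentiableAt ℂ H w) (c : ℂ) (j : Fin n) :
    wDbar (fun z => A z * conj (B z) + c * H z) j w =
      A w * conj (fderiv ℂ B w (Pi.single j 1)) := by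
  rw [wDbar_add (differentiableAt_mul_conj hA hB) ((hH.const_mul c).restrictScalars ℝ),
    wDbar_mul (hA.restrictScalars ℝ) (differentiableAt_conj hB), wDbar_conj hB,
    wDbar_eq_zero hA, wDbar_eq_zero (hH.const_mul c)]
  ring

end MixedDeformation

def IsWeightedHomogeneousFun {n : ℕ} (k : Fin n → ℕ) (d : ℕ) (A : (Fin n → ℂ) → ℂ) : Prop :=
  ∀ c : ℂ, c ≠ 0 → ∀ z : Fin n → ℂ, A (fun i => c ^ k i * z i) = c ^ d * A z

namespace IsWeightedHomogeneousFun

variable {n : ℕ} {k : Fin n → ℕ} {d : ℕ} {A : (Fin n → ℂ) → ℂ}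

lemma of_fin_two {A : (Fin 2 → ℂ) → ℂ} {q p : ℕ}
    (hA : ∀ c : ℂ, c ≠ 0 → ∀ z : Fin 2 → ℂ, A ![c ^ q * z 0, c ^ p * z 1] = c ^ d * A z) :
    IsWeightedHomogeneousFun ![q, p] d A := fun c hc z => by
  convert hA c hc z using 2
  ext i
  fin_cases i <;> rfl

lemma apply_zero (hA : IsWeightedHomogeneousFun k d A) (hd : d ≠ 0) : A 0 = 0 := by
  have h2 : (2 : ℂ) ^ d ≠ 1 := by exact_mod_cast (Nat.one_lt_two_pow hd).ne'
  have hfix : A 0 = 2 ^ d * A 0 := by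
    convert hA 2 two_ne_zero 0
    simp
  have hprod : ((2 : ℂ) ^ d - 1) * A 0 = 0 := by linear_combination -hfix
  exact (mul_eq_zero.mp hprod).resolve_left (sub_ne_zero.mpr h2)

/-- Differentiate `c ↦ A (c^k z)` at `c = 1`. -/
theorem euler (hA : IsWeightedHomogeneousFun k d A) {z : Fin n → ℂ}
    (hAz : DifferentiableAt ℂ A z) :
    ∑ i, (k i * z i) * fderiv ℂ A z (Pi.single i 1) = d * A z := by
  have hcurve : HasDerivAt (fun c : ℂ => fun i => c ^ k i * z i) (fun i => k i * z i) 1 := by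
    rw [hasDerivAt_pi]
    exact fun i => by simpa using (hasDerivAt_pow (k i) (1 : ℂ)).mul_const (z i)
  have hcomp : HasDerivAt (fun c : ℂ => A (fun i => c ^ k i * z i))
      (fderiv ℂ A z fun i => k i * z i) 1 := by
    refine HasFDerivAt.comp_hasDerivAt (l := A) 1 ?_ hcurve
    simpa using hAz.hasFDerivAt
  have hpow : HasDerivAt (fun c : ℂ => c ^ d * A z) (d * A z) 1 := by
    simpa using (hasDerivAt_pow d (1 : ℂ)).mul_const (A z)
  have hfun : (fun c : ℂ => A (fun i => c ^ k i * z i)) =ᶠ[𝓝 1] fun c => c ^ d * A z :=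
    (eventually_ne_nhds one_ne_zero).mono fun c hc => hA c hc z
  rw [← hcomp.unique (hpow.congr_of_eventuallyEq hfun)]
  conv_rhs => rw [← Finset.univ_sum_single fun i => (k i : ℂ) * z i]
  rw [map_sum]
  refine Finset.sum_congr rfl fun i _ => ?_
  rw [Pi.single_eq_smul_single_one i ((k i : ℂ) * z i), map_smul, smul_eq_mul]

lemma eq_zero_of_fderiv_eq_zero (hA : IsWeightedHomogeneousFun k d A) {z : Fin n → ℂ}
    (hAz : DifferentiableAt ℂ A z) (hd : d ≠ 0) (hz : ∀ i, fderiv ℂ A z (Pi.single i 1) = 0) :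
    A z = 0 := by
  have heuler := hA.euler hAz
  simp only [hz, mul_zero, Finset.sum_const_zero] at heuler
  simpa [hd] using heuler.symm

end IsWeightedHomogeneousFun

theorem mul_eq_zero_and_eq_zero_of_wirtinger_eq_zero {n : ℕ} {k : Fin n → ℕ} {dA dB dH : ℕ}
    {A B H : (Fin n → ℂ) → ℂ} {c : ℂ} {w : Fin n → ℂ}
    (hA : IsWeightedHomogeneousFun k dA A) (hB : IsWeightedHomogeneousFun k dB B)
    (hH : IsWeightedHomogeneousFun k dH H) (hAw : DifferentiableAt ℂ A w)
    (hBw : DifferentiableAt ℂ B w) (hHw : DifferentiableAt ℂ H w)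
    (hdB : dB ≠ 0) (hdH : dH ≠ 0) (hc : c ≠ 0)
    (hw : ∀ j, wD (fun z => A z * conj (B z) + c * H z) j w = 0 ∧
      wDbar (fun z => A z * conj (B z) + c * H z) j w = 0) :
    A w * B w = 0 ∧ H w = 0 := by
  have hbar j := (wDbar_mul_conj_add_const_mul hAw hBw hHw c j).symm.trans (hw j).2
  have hdel j := (wD_mul_conj_add_const_mul hAw hBw hHw c j).symm.trans (hw j).1
  have hAB : A w * B w = 0 := by
    by_cases hA0 : A w = 0
    · rw [hA0, zero_mul]
    refine mul_eq_zero_of_right _ (hB.eq_zero_of_fderiv_eq_zero hBw hdB fun j => ?_)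
    simpa [hA0] using hbar j
  refine ⟨hAB, ?_⟩
  have hsum : conj (B w) * (dA * A w) + c * (dH * H w) = 0 := by
    rw [← hA.euler hAw, ← hH.euler hHw, Finset.mul_sum, Finset.mul_sum,
      ← Finset.sum_add_distrib]
    exact Finset.sum_eq_zero fun j _ => by linear_combination (k j * w j) * hdel j
  have hBA : conj (B w) * A w = 0 := by
    rcases mul_eq_zero.mp hAB with h0 | h0 <;> simp [h0]
  simpa [hc, hdH] using (by linear_combination hsum - dA * hBA : c * (dH * H w) = 0)

theorem stmt_11_general
    (p q m n : ℕ) (hp : 0 < p) (hq : 0 < q) (hm : 0 < m) (hn : 0 < n)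
    (hmn : n < m)
    (f g : MvPolynomial (Fin 2) ℂ)
    (hf : ∀ c : ℂ, c ≠ 0 → ∀ z : Fin 2 → ℂ,
      MvPolynomial.eval ![c ^ q * z 0, c ^ p * z 1] f =
        c ^ (p * q * m) * MvPolynomial.eval z f)
    (hg : ∀ c : ℂ, c ≠ 0 → ∀ z : Fin 2 → ℂ,
      MvPolynomial.eval ![c ^ q * z 0, c ^ p * z 1] g =
        c ^ (p * q * n) * MvPolynomial.eval z g)
    (γ₁ γ₂ : ℂ)
    (h : (Fin 2 → ℂ) → ℂ)
    (hh : h = fun z => γ₁ * z 0 ^ (p * (m - n)) + γ₂ * z 1 ^ (q * (m - n)))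
    (hcommon : ∀ z : Fin 2 → ℂ,
      MvPolynomial.eval z f * MvPolynomial.eval z g = 0 → h z = 0 → z = 0)
    (t : ℝ) (ht : 0 < t)
    (F : (Fin 2 → ℂ) → ℂ)
    (hF : F = fun z =>
      MvPolynomial.eval z f * (starRingEnd ℂ) (MvPolynomial.eval z g) + (t : ℂ) * h z) :
    (∀ w : Fin 2 → ℂ, (∀ j : Fin 2, wD F j w = 0 ∧ wDbar F j w = 0) → w = 0) ∧
    ((¬ ∀ j : Fin 2, wD F j 0 = 0 ∧ wDbar F j 0 = 0) → ¬ IsSingularity F 0) := by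
  have hfd (z : Fin 2 → ℂ) : DifferentiableAt ℂ (MvPolynomial.eval · f) z :=
    (AnalyticOnNhd.eval_mvPolynomial f z trivial).differentiableAt
  have hgd (z : Fin 2 → ℂ) : DifferentiableAt ℂ (MvPolynomial.eval · g) z :=
    (AnalyticOnNhd.eval_mvPolynomial g z trivial).differentiableAt
  have hfh : IsWeightedHomogeneousFun ![q, p] (p * q * m) (MvPolynomial.eval · f) :=
    .of_fin_two hf
  have hgh : IsWeightedHomogeneousFun ![q, p] (p * q * n) (MvPolynomial.eval · g) :=
    .of_fin_two hg
  have hhd : Differentiable ℂ h := by subst hh; fun_prop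
  have hhh : IsWeightedHomogeneousFun ![q, p] (p * q * (m - n)) h := .of_fin_two fun c _ z => by
    subst hh
    simp only [Matrix.cons_val_zero, Matrix.cons_val_one]
    ring
  have hpq_pos : 0 < p * q := Nat.mul_pos hp hq
  subst hF
  refine ⟨fun w hw => ?_, fun hne => ?_⟩
  · obtain ⟨hfg, hhw⟩ := mul_eq_zero_and_eq_zero_of_wirtinger_eq_zero hfh hgh hhh
      (hfd w) (hgd w) (hhd w) (Nat.mul_pos hpq_pos hn).ne'
      (Nat.mul_pos hpq_pos (Nat.sub_pos_of_lt hmn)).ne' (ofReal_ne_zero.mpr ht.ne') hw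
    exact hcommon w hfg hhw
  · refine not_isSingularity_of_wDbar_eq_zero
      (differentiableAt_mul_conj_add_const_mul (hfd 0) (hgd 0) (hhd 0) _) (fun j => ?_) hne
    rw [wDbar_mul_conj_add_const_mul (hfd 0) (hgd 0) (hhd 0),
      hfh.apply_zero (Nat.mul_pos hpq_pos hm).ne', zero_mul]

/-- For the deformation `F_t = fḡ + t·h` with `h = γ₁z₁^{p(m−n)} + γ₂z₂^{q(m−n)}` whose
zero set meets `{fg = 0}` only at the origin: (a) any point where all Wirtinger
derivatives of `F_t` vanish is the origin; (b) if the origin is not such a point, the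
origin is a regular point of `F_t`. -/
theorem stmt_11
    (p q m n : ℕ) (hp : 0 < p) (hq : 0 < q) (hm : 0 < m) (hn : 0 < n)
    (hmn : n < m) (hpq : p ≤ q)
    (f g : MvPolynomial (Fin 2) ℂ)
    (hf : ∀ c : ℂ, c ≠ 0 → ∀ z : Fin 2 → ℂ,
      MvPolynomial.eval ![c ^ q * z 0, c ^ p * z 1] f =
        c ^ (p * q * m) * MvPolynomial.eval z f)
    (hg : ∀ c : ℂ, c ≠ 0 → ∀ z : Fin 2 → ℂ,
      MvPolynomial.eval ![c ^ q * z 0, c ^ p * z 1] g =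
        c ^ (p * q * n) * MvPolynomial.eval z g)
    (ha₁ : MvPolynomial.coeff (Finsupp.single 0 (p * m)) f ≠ 0)
    (ha₂ : MvPolynomial.coeff (Finsupp.single 1 (q * m)) f ≠ 0)
    (hb₁ : MvPolynomial.coeff (Finsupp.single 0 (p * n)) g ≠ 0)
    (hb₂ : MvPolynomial.coeff (Finsupp.single 1 (q * n)) g ≠ 0)
    (hsing0 : IsSingularity
      (fun z => MvPolynomial.eval z f * (starRingEnd ℂ) (MvPolynomial.eval z g)) 0)
    (hiso : ∃ ε : ℝ, 0 < ε ∧ ∀ w : Fin 2 → ℂ, w ≠ 0 → ‖w‖ < ε → ¬ IsSingularity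
      (fun z => MvPolynomial.eval z f * (starRingEnd ℂ) (MvPolynomial.eval z g)) w)
    (γ₁ γ₂ : ℂ) (hγ₁ : γ₁ ≠ 0) (hγ₂ : γ₂ ≠ 0)
    (h : (Fin 2 → ℂ) → ℂ)
    (hh : h = fun z => γ₁ * z 0 ^ (p * (m - n)) + γ₂ * z 1 ^ (q * (m - n)))
    (hcommon : ∀ z : Fin 2 → ℂ,
      MvPolynomial.eval z f * MvPolynomial.eval z g = 0 → h z = 0 → z = 0)
    (t : ℝ) (ht : 0 < t)
    (F : (Fin 2 → ℂ) → ℂ)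
    (hF : F = fun z =>
      MvPolynomial.eval z f * (starRingEnd ℂ) (MvPolynomial.eval z g) + (t : ℂ) * h z) :
    (∀ w : Fin 2 → ℂ, (∀ j : Fin 2, wD F j w = 0 ∧ wDbar F j w = 0) → w = 0) ∧
    ((¬ ∀ j : Fin 2, wD F j 0 = 0 ∧ wDbar F j 0 = 0) → ¬ IsSingularity F 0) :=
  stmt_11_general p q m n hp hq hm hn hmn f g hf hg γ₁ γ₂ h hh hcommon t ht F hF

end
end

section
/- In the setting of the weighted homogeneous pair (f,g), let h(z) = γ_1 z_1^{p(m−n)} + γ_2 z_2^{q(m−n)} with γ_1, γ_2 ∈ ℂ∖{0}, t ∈ ℝ, and F_t = fḡ + t·h. Suppose w ∈ ℂ² and α ∈ ℂ with |α| = 1 satisfy conj(∂F_t/∂z_j(w)) = α·∂F_t/∂z̄_j(w) for j = 1, 2. Then pqm·conj(f(w))·g(w) + pq(m−n)·t·conj(h(w)) = α·pqn·f(w)·conj(g(w)), and consequently F_t(w) = (−n/(m−n))·( f(w)·conj(g(w)) − conj(α)·conj(f(w))·g(w) ). -/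
/-!
With `f, g, h` holomorphic, the Wirtinger derivatives of `F_t = f·ḡ + t·h` are
`∂F_t/∂z_j = ∂_j f·ḡ + t·∂_j h` and `∂F_t/∂z̄_j = f·conj(∂_j g)`. Conjugate the two critical-point
equations, multiply them by `q w₁` and `p w₂` and add: the weighted Euler identity
`q z₁ ∂₁P + p z₂ ∂₂P = d·P`, valid for `P` weighted homogeneous of degree `d` (here `f`, `g`, `h`
of degrees `pqm`, `pqn`, `pq(m-n)`), collapses the sum to the stated relation. Dividing its
conjugate by `pq` expresses `t·h(w)` through `f(w)ḡ(w)` and its conjugate, which gives `F_t(w)`.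
-/

open Complex

noncomputable section

open ComplexConjugate

theorem differentiableAt_mvPolynomial_eval {σ : Type*} [Fintype σ] (P : MvPolynomial σ ℂ)
    (w : σ → ℂ) : DifferentiableAt ℂ (fun z => MvPolynomial.eval z P) w :=
  (AnalyticAt.aeval_mvPolynomial
    (fun i => (ContinuousLinearMap.proj (R := ℂ) (φ := fun _ : σ => ℂ) i).analyticAt w)
    P).differentiableAt

theorem weighted_euler {n : ℕ} {A : (Fin n → ℂ) → ℂ} {w : Fin n → ℂ}
    (hA : DifferentiableAt ℂ A w) (a : Fin n → ℕ) (k : ℕ)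
    (hhom : ∀ c : ℂ, c ≠ 0 → ∀ z : Fin n → ℂ, A (fun i => c ^ a i * z i) = c ^ k * A z) :
    ∑ i, (a i : ℂ) * w i * fderiv ℂ A w (Pi.single i 1) = k * A w := by
  have hcurve : HasDerivAt (fun c : ℂ => fun i => c ^ a i * w i) (fun i => (a i : ℂ) * w i) 1 := by
    rw [hasDerivAt_pi]
    intro i
    simpa using (hasDerivAt_pow (a i) (1 : ℂ)).mul_const (w i)
  have hcomp : HasDerivAt (fun c : ℂ => A fun i => c ^ a i * w i)
      (fderiv ℂ A w fun i => (a i : ℂ) * w i) 1 :=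
    HasFDerivAt.comp_hasDerivAt (l := A) 1 (by simpa using hA.hasFDerivAt) hcurve
  have hscale : HasDerivAt (fun c : ℂ => A fun i => c ^ a i * w i) ((k : ℂ) * A w) 1 := by
    refine (((hasDerivAt_pow k (1 : ℂ)).mul_const (A w)).congr_of_eventuallyEq ?_).congr_deriv
      (by simp)
    filter_upwards [isOpen_ne.mem_nhds one_ne_zero] with c hc using hhom c hc w
  rw [← hcomp.unique hscale, ← Finset.univ_sum_single fun i => (a i : ℂ) * w i, map_sum]
  congr! 1 with i
  rw [← smul_eq_mul, ← map_smul, ← Pi.single_smul', smul_eq_mul, mul_one]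

theorem weighted_euler_two {A : (Fin 2 → ℂ) → ℂ} {w : Fin 2 → ℂ} (hA : DifferentiableAt ℂ A w)
    (q p k : ℕ)
    (hhom : ∀ c : ℂ, c ≠ 0 → ∀ z : Fin 2 → ℂ, A ![c ^ q * z 0, c ^ p * z 1] = c ^ k * A z) :
    q * w 0 * fderiv ℂ A w (Pi.single 0 1) + p * w 1 * fderiv ℂ A w (Pi.single 1 1) =
      k * A w := by
  have hvec : ∀ (c : ℂ) (z : Fin 2 → ℂ),
      (fun i => c ^ ![q, p] i * z i) = ![c ^ q * z 0, c ^ p * z 1] := by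
    intro c z
    funext i
    fin_cases i <;> rfl
  simpa [Fin.sum_univ_two] using weighted_euler hA ![q, p] k (by simpa only [hvec] using hhom)

theorem wD_wDbar_of_hasFDerivAt {n : ℕ} {P : (Fin n → ℂ) → ℂ} {w : Fin n → ℂ}
    {L₁ L₂ : (Fin n → ℂ) →L[ℂ] ℂ}
    (hP : HasFDerivAt P
      (L₁.restrictScalars ℝ + conjCLE.toContinuousLinearMap.comp (L₂.restrictScalars ℝ)) w)
    (j : Fin n) :
    wD P j w = L₁ (Pi.single j 1) ∧ wDbar P j w = conj (L₂ (Pi.single j 1)) := by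
  have hI : ∀ L : (Fin n → ℂ) →L[ℂ] ℂ, L (Pi.single j I) = I * L (Pi.single j 1) := fun L => by
    rw [← smul_eq_mul, ← map_smul, ← Pi.single_smul', smul_eq_mul, mul_one]
  simp only [wD, wDbar, hP.fderiv, add_apply,
    ContinuousLinearMap.coe_restrictScalars', ContinuousLinearMap.coe_comp,
    ContinuousLinearEquiv.coe_coe, Function.comp_apply, conjCLE_apply, hI, map_mul, conj_I]
  constructor
  · linear_combination (-L₁ (Pi.single j 1) + conj (L₂ (Pi.single j 1))) / 2 * I_sq
  · linear_combination (L₁ (Pi.single j 1) - conj (L₂ (Pi.single j 1))) / 2 * I_sq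

theorem hasFDerivAt_mul_conj_add_const_mul {n : ℕ} {A B H : (Fin n → ℂ) → ℂ} {w : Fin n → ℂ}
    (hA : DifferentiableAt ℂ A w) (hB : DifferentiableAt ℂ B w) (hH : DifferentiableAt ℂ H w)
    (s : ℂ) :
    HasFDerivAt (fun z => A z * conj (B z) + s * H z)
      ((conj (B w) • fderiv ℂ A w + s • fderiv ℂ H w).restrictScalars ℝ +
        conjCLE.toContinuousLinearMap.comp ((conj (A w) • fderiv ℂ B w).restrictScalars ℝ)) w := by
  have hconjB := conjCLE.toContinuousLinearMap.hasFDerivAt.comp w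
    (hB.hasFDerivAt.restrictScalars ℝ)
  refine (((hA.hasFDerivAt.restrictScalars ℝ).mul hconjB).add
    ((hH.hasFDerivAt.restrictScalars ℝ).const_mul s)).congr_fderiv ?_
  ext v
  simp only [ContinuousLinearEquiv.coe_coe, ContinuousAlgEquiv.coe_coeCLE, Function.comp_apply,
    conjCAE_apply, add_apply, smul_apply, ContinuousLinearMap.comp_apply,
    ContinuousLinearMap.coe_restrictScalars', ContinuousAlgEquiv.coeCLE_apply, smul_eq_mul,
    ContinuousLinearMap.restrictScalars_add, ContinuousLinearMap.restrictScalars_smul, map_mul,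
    RingHomCompTriple.comp_apply, RingHom.id_apply]
  ring

theorem wD_wDbar_mul_conj_add_const_mul {n : ℕ} {A B H : (Fin n → ℂ) → ℂ} {w : Fin n → ℂ}
    (hA : DifferentiableAt ℂ A w) (hB : DifferentiableAt ℂ B w) (hH : DifferentiableAt ℂ H w)
    (s : ℂ) (j : Fin n) :
    wD (fun z => A z * conj (B z) + s * H z) j w =
        fderiv ℂ A w (Pi.single j 1) * conj (B w) + s * fderiv ℂ H w (Pi.single j 1) ∧
      wDbar (fun z => A z * conj (B z) + s * H z) j w =
        A w * conj (fderiv ℂ B w (Pi.single j 1)) := by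
  obtain ⟨hwD, hwDbar⟩ :=
    wD_wDbar_of_hasFDerivAt (hasFDerivAt_mul_conj_add_const_mul hA hB hH s) j
  refine ⟨hwD.trans ?_, hwDbar.trans ?_⟩ <;>
    simp only [add_apply, smul_apply, smul_eq_mul, map_mul, conj_conj]
  ring

theorem stmt_14_general (p q m n : ℕ) (hp : 0 < p) (hq : 0 < q)
    (hmn : n < m)
    (f g : MvPolynomial (Fin 2) ℂ)
    (hf : ∀ c : ℂ, c ≠ 0 → ∀ z : Fin 2 → ℂ,
      MvPolynomial.eval ![c ^ q * z 0, c ^ p * z 1] f =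
        c ^ (p * q * m) * MvPolynomial.eval z f)
    (hg : ∀ c : ℂ, c ≠ 0 → ∀ z : Fin 2 → ℂ,
      MvPolynomial.eval ![c ^ q * z 0, c ^ p * z 1] g =
        c ^ (p * q * n) * MvPolynomial.eval z g)
    (γ₁ γ₂ : ℂ)
    (h : (Fin 2 → ℂ) → ℂ)
    (hh : h = fun z => γ₁ * z 0 ^ (p * (m - n)) + γ₂ * z 1 ^ (q * (m - n)))
    (t : ℝ)
    (F : (Fin 2 → ℂ) → ℂ)
    (hF : F = fun z =>
      MvPolynomial.eval z f * (starRingEnd ℂ) (MvPolynomial.eval z g) + (t : ℂ) * h z)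
    (w : Fin 2 → ℂ) (α : ℂ)
    (hsing : ∀ j : Fin 2, (starRingEnd ℂ) (wD F j w) = α * wDbar F j w) :
    ((p * q * m : ℕ) : ℂ) * (starRingEnd ℂ) (MvPolynomial.eval w f) *
          MvPolynomial.eval w g +
        ((p * q * (m - n) : ℕ) : ℂ) * (t : ℂ) * (starRingEnd ℂ) (h w) =
      α * ((p * q * n : ℕ) : ℂ) * MvPolynomial.eval w f *
        (starRingEnd ℂ) (MvPolynomial.eval w g) ∧
    F w = (-(n : ℂ) / ((m : ℂ) - (n : ℂ))) *
      (MvPolynomial.eval w f * (starRingEnd ℂ) (MvPolynomial.eval w g) -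
        (starRingEnd ℂ) α * (starRingEnd ℂ) (MvPolynomial.eval w f) *
          MvPolynomial.eval w g) := by
  have hdf := differentiableAt_mvPolynomial_eval f w
  have hdg := differentiableAt_mvPolynomial_eval g w
  have hdh : DifferentiableAt ℂ h w := by subst hh; fun_prop
  have hhom : ∀ c : ℂ, c ≠ 0 → ∀ z : Fin 2 → ℂ,
      h ![c ^ q * z 0, c ^ p * z 1] = c ^ (p * q * (m - n)) * h z := fun c _ z => by
    subst hh
    simp only [Matrix.cons_val_zero, Matrix.cons_val_one]
    ring
  have eulerF := weighted_euler_two hdf q p _ hf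
  have eulerG := weighted_euler_two hdg q p _ hg
  have eulerH := weighted_euler_two hdh q p _ hhom
  set u := MvPolynomial.eval w f
  set v := MvPolynomial.eval w g
  have hcrit : ∀ j : Fin 2,
      fderiv ℂ (fun z => MvPolynomial.eval z f) w (Pi.single j 1) * conj v +
          t * fderiv ℂ h w (Pi.single j 1) =
        conj α * conj u * fderiv ℂ (fun z => MvPolynomial.eval z g) w (Pi.single j 1) := by
    intro j
    obtain ⟨hwD, hwDbar⟩ := wD_wDbar_mul_conj_add_const_mul hdf hdg hdh t j
    have := congrArg conj (hsing j)
    subst hF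
    rw [hwD, hwDbar] at this
    simp only [map_add, map_mul, conj_conj, conj_ofReal] at this
    linear_combination this
  have hrel : ((p * q * m : ℕ) : ℂ) * u * conj v + ((p * q * (m - n) : ℕ) : ℂ) * t * h w =
      conj α * ((p * q * n : ℕ) : ℂ) * conj u * v := by
    linear_combination q * w 0 * hcrit 0 + p * w 1 * hcrit 1 - conj v * eulerF - t * eulerH +
      conj α * conj u * eulerG
  refine ⟨by simpa using congrArg conj hrel, ?_⟩
  have hpq_ne : (p * q : ℂ) ≠ 0 := by exact_mod_cast (Nat.mul_pos hp hq).ne'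
  have hmn' : (m : ℂ) - n ≠ 0 := sub_ne_zero.2 (by exact_mod_cast hmn.ne')
  have hrel' : (m : ℂ) * u * conj v + (m - n) * t * h w = conj α * n * conj u * v := by
    refine mul_left_cancel₀ hpq_ne ?_
    push_cast [Nat.cast_sub hmn.le] at hrel
    linear_combination hrel
  subst hF
  field_simp
  linear_combination hrel'

/-- At a singular point `w` of `F_t = fḡ + t·h` (witnessed by `α` on the unit circle),
the Euler-type relation
`pqm·conj(f(w))·g(w) + pq(m−n)·t·conj(h(w)) = α·pqn·f(w)·conj(g(w))` holds, and hence
`F_t(w) = (−n/(m−n))·(f(w)·conj(g(w)) − conj(α)·conj(f(w))·g(w))`. -/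
theorem stmt_14 (p q m n : ℕ) (hp : 0 < p) (hq : 0 < q) (hm : 0 < m) (hn : 0 < n)
    (hmn : n < m) (hpq : p ≤ q)
    (f g : MvPolynomial (Fin 2) ℂ)
    (hf : ∀ c : ℂ, c ≠ 0 → ∀ z : Fin 2 → ℂ,
      MvPolynomial.eval ![c ^ q * z 0, c ^ p * z 1] f =
        c ^ (p * q * m) * MvPolynomial.eval z f)
    (hg : ∀ c : ℂ, c ≠ 0 → ∀ z : Fin 2 → ℂ,
      MvPolynomial.eval ![c ^ q * z 0, c ^ p * z 1] g =
        c ^ (p * q * n) * MvPolynomial.eval z g)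
    (γ₁ γ₂ : ℂ) (hγ₁ : γ₁ ≠ 0) (hγ₂ : γ₂ ≠ 0)
    (h : (Fin 2 → ℂ) → ℂ)
    (hh : h = fun z => γ₁ * z 0 ^ (p * (m - n)) + γ₂ * z 1 ^ (q * (m - n)))
    (t : ℝ)
    (F : (Fin 2 → ℂ) → ℂ)
    (hF : F = fun z =>
      MvPolynomial.eval z f * (starRingEnd ℂ) (MvPolynomial.eval z g) + (t : ℂ) * h z)
    (w : Fin 2 → ℂ) (α : ℂ) (hα : ‖α‖ = 1)
    (hsing : ∀ j : Fin 2, (starRingEnd ℂ) (wD F j w) = α * wDbar F j w) :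
    ((p * q * m : ℕ) : ℂ) * (starRingEnd ℂ) (MvPolynomial.eval w f) *
          MvPolynomial.eval w g +
        ((p * q * (m - n) : ℕ) : ℂ) * (t : ℂ) * (starRingEnd ℂ) (h w) =
      α * ((p * q * n : ℕ) : ℂ) * MvPolynomial.eval w f *
        (starRingEnd ℂ) (MvPolynomial.eval w g) ∧
    F w = (-(n : ℂ) / ((m : ℂ) - (n : ℂ))) *
      (MvPolynomial.eval w f * (starRingEnd ℂ) (MvPolynomial.eval w g) -
        (starRingEnd ℂ) α * (starRingEnd ℂ) (MvPolynomial.eval w f) *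
          MvPolynomial.eval w g) :=
  stmt_14_general p q m n hp hq hmn f g hf hg γ₁ γ₂ h hh t F hF w α hsing

end
end

section
/- Let m ≥ 2, let f ∈ ℂ[z_1,z_2] be homogeneous of degree m, let β, γ ∈ ℂ and t ∈ ℝ, and set g(z) = z_1 + β·z_2, h(z) = z_1^m·conj(z_1) + z_1^{m−1} + γ·z_2^{m−1}, and F_t(z) = f(z)·conj(g(z)) + t·h(z). Then at every point of ℂ² the determinant of the mixed Hessian of F_t equals t²·m²·conj(β)²·z_1^{2m−2}·(∂f/∂z_2)². -/
open Complex

noncomputable section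

/-!
Write a mixed polynomial as a polynomial `P` in `2n` variables evaluated at `(z, z̄)`. By the chain
rule through the `ℝ`-linear map `z ↦ (z, z̄)`, the Wirtinger derivatives `∂/∂z_j` and `∂/∂z̄_j`
become the formal partial derivatives of `P` in the `j`-th variable of the first and of the second
block. Since `F_t` is affine in `z̄`, the `∂z̄ ∂z̄` block of its mixed Hessian vanishes, so the
determinant is the product of the determinants of the two off-diagonal blocks, each of which is
`t m conj(β) z₁^{m-1} ∂f/∂z₂`.
-/

open MvPolynomial ComplexConjugate

section PolynomialDerivative

variable {𝕜 ι : Type*} [NontriviallyNormedField 𝕜] [Fintype ι] [DecidableEq ι]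

theorem MvPolynomial.hasFDerivAt_eval (P : MvPolynomial ι 𝕜) (x : ι → 𝕜) :
    HasFDerivAt (fun y => eval y P)
      (∑ a, eval x (pderiv a P) • ContinuousLinearMap.proj (R := 𝕜) (φ := fun _ => 𝕜) a) x := by
  induction P using MvPolynomial.induction_on with
  | C c =>
    simp only [eval_C]
    exact (hasFDerivAt_const c x).congr_fderiv (by ext; simp)
  | add p q hp hq =>
    simp only [map_add]
    exact (hp.add hq).congr_fderiv (by ext; simp [Finset.sum_add_distrib, add_mul])
  | mul_X p i hp =>
    simp only [map_mul, eval_X]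
    refine (hp.mul (ContinuousLinearMap.proj i).hasFDerivAt).congr_fderiv ?_
    ext v
    simp [Derivation.leibniz, Pi.single_apply, Finset.sum_add_distrib, add_mul, Finset.mul_sum,
      apply_ite (eval x), mul_assoc]

theorem MvPolynomial.fderiv_eval_single (P : MvPolynomial ι 𝕜) (x : ι → 𝕜) (a : ι) :
    fderiv 𝕜 (fun y => eval y P) x (Pi.single a 1) = eval x (pderiv a P) := by
  simp [(MvPolynomial.hasFDerivAt_eval P x).fderiv, Pi.single_apply]

end PolynomialDerivative

section Wirtinger

variable {n : ℕ}

def conjEmbed : (Fin n → ℂ) →L[ℝ] (Fin n ⊕ Fin n → ℂ) :=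
  ContinuousLinearMap.pi <| Sum.elim (ContinuousLinearMap.proj (R := ℝ) (φ := fun _ => ℂ))
    fun j => conjCLE.toContinuousLinearMap.comp (ContinuousLinearMap.proj j)

@[simp]
theorem conjEmbed_apply (z : Fin n → ℂ) : conjEmbed z = Sum.elim z (fun j => conj (z j)) := by
  ext (j | j) <;> rfl

theorem conjEmbed_single (j : Fin n) (c : ℂ) :
    conjEmbed (Pi.single j c) = c • Pi.single (Sum.inl j) 1 + conj c • Pi.single (Sum.inr j) 1 := by
  ext (k | k) <;> by_cases h : k = j <;> simp [h, Pi.single_apply]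

theorem fderiv_comp_conjEmbed {Φ : (Fin n ⊕ Fin n → ℂ) → ℂ} {w : Fin n → ℂ}
    (hΦ : DifferentiableAt ℂ Φ (conjEmbed w)) (j : Fin n) (c : ℂ) :
    fderiv ℝ (fun z => Φ (conjEmbed z)) w (Pi.single j c) =
      c * fderiv ℂ Φ (conjEmbed w) (Pi.single (Sum.inl j) 1) +
        conj c * fderiv ℂ Φ (conjEmbed w) (Pi.single (Sum.inr j) 1) := by
  have hd := (hΦ.hasFDerivAt.restrictScalars ℝ).comp w conjEmbed.hasFDerivAt
  rw [Function.comp_def] at hd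
  rw [hd.fderiv]
  simp only [ContinuousLinearMap.comp_apply,
    ContinuousLinearMap.coe_restrictScalars', conjEmbed_single, map_add, map_smul, smul_eq_mul]

theorem wD_comp_conjEmbed {Φ : (Fin n ⊕ Fin n → ℂ) → ℂ} {w : Fin n → ℂ}
    (hΦ : DifferentiableAt ℂ Φ (conjEmbed w)) (j : Fin n) :
    wD (fun z => Φ (conjEmbed z)) j w = fderiv ℂ Φ (conjEmbed w) (Pi.single (Sum.inl j) 1) := by
  rw [wD, fderiv_comp_conjEmbed hΦ, fderiv_comp_conjEmbed hΦ]
  simp only [map_one, conj_I, one_mul]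
  ring_nf
  rw [I_sq]
  ring

theorem wDbar_comp_conjEmbed {Φ : (Fin n ⊕ Fin n → ℂ) → ℂ} {w : Fin n → ℂ}
    (hΦ : DifferentiableAt ℂ Φ (conjEmbed w)) (j : Fin n) :
    wDbar (fun z => Φ (conjEmbed z)) j w = fderiv ℂ Φ (conjEmbed w) (Pi.single (Sum.inr j) 1) := by
  rw [wDbar, fderiv_comp_conjEmbed hΦ, fderiv_comp_conjEmbed hΦ]
  simp only [map_one, conj_I, one_mul]
  ring_nf
  rw [I_sq]
  ring

end Wirtinger

section MixedPolynomial

variable {n : ℕ}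

def mixedEval (P : MvPolynomial (Fin n ⊕ Fin n) ℂ) (z : Fin n → ℂ) : ℂ :=
  eval (Sum.elim z fun j => conj (z j)) P

theorem mixedEval_eq_eval_conjEmbed (P : MvPolynomial (Fin n ⊕ Fin n) ℂ) :
    mixedEval P = fun z => eval (conjEmbed z) P := by
  funext z
  rw [conjEmbed_apply, mixedEval]

theorem wD_mixedEval (P : MvPolynomial (Fin n ⊕ Fin n) ℂ) (j : Fin n) :
    wD (mixedEval P) j = mixedEval (pderiv (Sum.inl j) P) := by
  funext w
  rw [mixedEval_eq_eval_conjEmbed, wD_comp_conjEmbed (hasFDerivAt_eval P _).differentiableAt,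
    fderiv_eval_single, mixedEval_eq_eval_conjEmbed]

theorem wDbar_mixedEval (P : MvPolynomial (Fin n ⊕ Fin n) ℂ) (j : Fin n) :
    wDbar (mixedEval P) j = mixedEval (pderiv (Sum.inr j) P) := by
  funext w
  rw [mixedEval_eq_eval_conjEmbed, wDbar_comp_conjEmbed (hasFDerivAt_eval P _).differentiableAt,
    fderiv_eval_single, mixedEval_eq_eval_conjEmbed]

theorem mixedHessian_mixedEval (P : MvPolynomial (Fin n ⊕ Fin n) ℂ) (w : Fin n → ℂ) :
    mixedHessian (mixedEval P) w = Matrix.of fun a b => mixedEval (pderiv a (pderiv b P)) w := by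
  ext (j | j) (k | k) <;> simp [mixedHessian, wD_mixedEval, wDbar_mixedEval]

end MixedPolynomial

theorem MvPolynomial.pderiv_inr_rename_inl {R σ τ : Type*} [CommSemiring R]
    [DecidableEq σ] [DecidableEq τ] (p : MvPolynomial σ R) (k : τ) :
    pderiv (Sum.inr k) (rename Sum.inl p) = 0 :=
  pderiv_eq_zero_of_notMem_vars fun hk => by
    obtain ⟨_, _, h⟩ := Finset.mem_image.1 (vars_rename _ _ hk)
    exact Sum.inl_ne_inr h

theorem Matrix.det_fromBlocks_zero₂₂_fin_two {R : Type*} [CommRing R]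
    (A B C : Matrix (Fin 2) (Fin 2) R) : (fromBlocks A B C 0).det = B.det * C.det := by
  have h := det_permute' (Equiv.sumComm (Fin 2) (Fin 2)) (fromBlocks B A 0 C)
  have hsign : Equiv.Perm.sign (Equiv.sumComm (Fin 2) (Fin 2)) = 1 := by decide
  rw [hsign, det_fromBlocks_zero₂₁] at h
  simpa using h

theorem stmt_15_general (m : ℕ) (f : MvPolynomial (Fin 2) ℂ) (β γ : ℂ) (t : ℝ)
    (F : (Fin 2 → ℂ) → ℂ)
    (hF : F = fun z =>
      MvPolynomial.eval z f * (starRingEnd ℂ) (z 0 + β * z 1) +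
        (t : ℂ) * (z 0 ^ m * (starRingEnd ℂ) (z 0) + z 0 ^ (m - 1) + γ * z 1 ^ (m - 1))) :
    ∀ w : Fin 2 → ℂ,
      (mixedHessian F w).det =
        (t : ℂ) ^ 2 * (m : ℂ) ^ 2 * (starRingEnd ℂ) β ^ 2 * w 0 ^ (2 * m - 2) *
          MvPolynomial.eval w (MvPolynomial.pderiv 1 f) ^ 2 := by
  intro w
  let P : MvPolynomial (Fin 2 ⊕ Fin 2) ℂ :=
    rename Sum.inl f * (X (.inr 0) + C (conj β) * X (.inr 1)) +
      C (t : ℂ) * (X (.inl 0) ^ m * X (.inr 0) + X (.inl 0) ^ (m - 1) + C γ * X (.inl 1) ^ (m - 1))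
  have hFP : F = mixedEval P := by
    subst hF; funext z; simp [P, mixedEval, eval_rename, Function.comp_def]
  have hzero : (mixedHessian F w).toBlocks₂₂ = 0 := by
    ext j k
    fin_cases j <;> fin_cases k <;>
      simp [hFP, mixedHessian_mixedEval, Matrix.toBlocks₂₂, P, pderiv_inr_rename_inl, mixedEval]
  have hB : (mixedHessian F w).toBlocks₁₂ =
      !![eval w (pderiv 0 f) + t * (m * w 0 ^ (m - 1)), conj β * eval w (pderiv 0 f);
        eval w (pderiv 1 f), conj β * eval w (pderiv 1 f)] := by
    ext j k
    fin_cases j <;> fin_cases k <;>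
      simp [hFP, mixedHessian_mixedEval, Matrix.toBlocks₁₂, P, pderiv_inr_rename_inl,
        pderiv_rename Sum.inl_injective, mixedEval, eval_rename, Function.comp_def]
  have hC : (mixedHessian F w).toBlocks₂₁ =
      !![eval w (pderiv 0 f) + t * (m * w 0 ^ (m - 1)), eval w (pderiv 1 f);
        eval w (pderiv 0 f) * conj β, eval w (pderiv 1 f) * conj β] := by
    ext j k
    fin_cases j <;> fin_cases k <;>
      simp [hFP, mixedHessian_mixedEval, Matrix.toBlocks₂₁, P, pderiv_inr_rename_inl,
        pderiv_rename Sum.inl_injective, mixedEval, eval_rename, Function.comp_def]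
  rw [← Matrix.fromBlocks_toBlocks (mixedHessian F w), hzero, Matrix.det_fromBlocks_zero₂₂_fin_two,
    hB, hC, Matrix.det_fin_two_of, Matrix.det_fin_two_of,
    show 2 * m - 2 = (m - 1) + (m - 1) by omega, pow_add]
  ring

/-- For `F_t(z) = f(z)·conj(z₁ + βz₂) + t·(z₁^m·conj(z₁) + z₁^{m−1} + γz₂^{m−1})` with
`f` homogeneous of degree `m ≥ 2`, the determinant of the mixed Hessian of `F_t` equals
`t²·m²·conj(β)²·z₁^{2m−2}·(∂f/∂z₂)²` at every point. -/
theorem stmt_15 (m : ℕ) (hm : 2 ≤ m) (f : MvPolynomial (Fin 2) ℂ)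
    (hf : f.IsHomogeneous m) (β γ : ℂ) (t : ℝ)
    (F : (Fin 2 → ℂ) → ℂ)
    (hF : F = fun z =>
      MvPolynomial.eval z f * (starRingEnd ℂ) (z 0 + β * z 1) +
        (t : ℂ) * (z 0 ^ m * (starRingEnd ℂ) (z 0) + z 0 ^ (m - 1) + γ * z 1 ^ (m - 1))) :
    ∀ w : Fin 2 → ℂ,
      (mixedHessian F w).det =
        (t : ℂ) ^ 2 * (m : ℂ) ^ 2 * (starRingEnd ℂ) β ^ 2 * w 0 ^ (2 * m - 2) *
          MvPolynomial.eval w (MvPolynomial.pderiv 1 f) ^ 2 :=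
  stmt_15_general m f β γ t F hF

end
end

section
/- For (v_1, v_2) ∈ ℂ², the equation v_1² + 2·conj(v_1)·v_2 = 0 holds if and only if v_1 = 0 or there exist r > 0 and θ ∈ ℝ with v_1 = 2r·e^{iθ} and v_2 = −r·e^{3iθ}. Consequently, the zero set of v_1² + 2·conj(v_1)·v_2 is the union of the plane {v_1 = 0} and the set {(2r·e^{iθ}, −r·e^{3iθ}) : r > 0, θ ∈ ℝ}, and this zero set is invariant under the circle action (v_1,v_2) ↦ (s·v_1, s³·v_2) for s ∈ ℂ with |s| = 1. -/
open Complex ComplexConjugate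

theorem sq_add_two_mul_conj_mul_equivariant {R : Type*} [CommRing R] [StarRing R]
    (s v₁ v₂ : R) (hs : star s * s = 1) :
    (s * v₁) ^ 2 + 2 * conj (s * v₁) * (s ^ 3 * v₂) = s ^ 2 * (v₁ ^ 2 + 2 * conj v₁ * v₂) := by
  simp only [map_mul, starRingEnd_apply]
  linear_combination 2 * star v₁ * v₂ * s ^ 2 * hs

theorem sq_add_two_mul_conj_mul_eq_zero_of_polar (r θ : ℝ) :
    (2 * (r : ℂ) * exp (θ * I)) ^ 2
      + 2 * conj (2 * (r : ℂ) * exp (θ * I)) * -((r : ℂ) * exp (3 * θ * I)) = 0 := by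
  have hconj : conj (exp (θ * I)) = exp (-(θ * I)) := by
    rw [← exp_conj, map_mul, conj_ofReal, conj_I, mul_neg]
  have hexp : exp (-(θ * I)) * exp (3 * θ * I) = exp (θ * I) ^ 2 := by
    rw [← exp_add, ← exp_nat_mul]
    ring_nf
  simp only [map_mul, map_ofNat, conj_ofReal, hconj]
  linear_combination -4 * (r : ℂ) ^ 2 * hexp

/- The equation is affine in `v₂` with leading coefficient `2 conj v₁`, so for `v₁ ≠ 0` its
unique solution is the point of the curve through `v₁` written in polar form. -/
theorem sq_add_two_mul_conj_mul_eq_zero_iff (v₁ v₂ : ℂ) :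
    v₁ ^ 2 + 2 * conj v₁ * v₂ = 0 ↔
      v₁ = 0 ∨ ∃ r : ℝ, 0 < r ∧ ∃ θ : ℝ,
        v₁ = 2 * (r : ℂ) * exp (θ * I) ∧ v₂ = -((r : ℂ) * exp (3 * θ * I)) := by
  constructor
  · intro h
    rcases eq_or_ne v₁ 0 with hv₁ | hv₁
    · exact .inl hv₁
    have hpolar : v₁ = 2 * ((‖v₁‖ / 2 : ℝ) : ℂ) * exp (arg v₁ * I) := by
      push_cast
      linear_combination -(norm_mul_exp_arg_mul_I v₁)
    refine .inr ⟨‖v₁‖ / 2, by positivity, arg v₁, hpolar, ?_⟩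
    have hcurve := sq_add_two_mul_conj_mul_eq_zero_of_polar (‖v₁‖ / 2) (arg v₁)
    rw [← hpolar] at hcurve
    have hcoeff : 2 * conj v₁ ≠ 0 := mul_ne_zero two_ne_zero ((map_ne_zero _).mpr hv₁)
    exact mul_left_cancel₀ hcoeff (by linear_combination h - hcurve)
  · rintro (rfl | ⟨r, -, θ, rfl, rfl⟩)
    · simp
    · exact sq_add_two_mul_conj_mul_eq_zero_of_polar r θ

/-- `v₁² + 2·conj(v₁)·v₂ = 0` iff `v₁ = 0` or `(v₁,v₂) = (2r·e^{iθ}, −r·e^{3iθ})` for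
some `r > 0`, `θ ∈ ℝ`; the zero set is the corresponding union, and it is invariant
under `(v₁,v₂) ↦ (s·v₁, s³·v₂)` for `|s| = 1`. -/
theorem stmt_16 :
    (∀ v₁ v₂ : ℂ, v₁ ^ 2 + 2 * (starRingEnd ℂ) v₁ * v₂ = 0 ↔
      (v₁ = 0 ∨ ∃ r : ℝ, 0 < r ∧ ∃ θ : ℝ,
        v₁ = 2 * (r : ℂ) * Complex.exp ((θ : ℂ) * Complex.I) ∧
        v₂ = -((r : ℂ) * Complex.exp (3 * (θ : ℂ) * Complex.I)))) ∧
    ({v : ℂ × ℂ | v.1 ^ 2 + 2 * (starRingEnd ℂ) v.1 * v.2 = 0} =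
      {v : ℂ × ℂ | v.1 = 0} ∪
        {v : ℂ × ℂ | ∃ r : ℝ, 0 < r ∧ ∃ θ : ℝ,
          v.1 = 2 * (r : ℂ) * Complex.exp ((θ : ℂ) * Complex.I) ∧
          v.2 = -((r : ℂ) * Complex.exp (3 * (θ : ℂ) * Complex.I))}) ∧
    (∀ s : ℂ, ‖s‖ = 1 → ∀ v₁ v₂ : ℂ,
      v₁ ^ 2 + 2 * (starRingEnd ℂ) v₁ * v₂ = 0 →
      (s * v₁) ^ 2 + 2 * (starRingEnd ℂ) (s * v₁) * (s ^ 3 * v₂) = 0) := by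
  refine ⟨sq_add_two_mul_conj_mul_eq_zero_iff, ?_, ?_⟩
  · ext ⟨v₁, v₂⟩
    exact sq_add_two_mul_conj_mul_eq_zero_iff v₁ v₂
  · intro s hs v₁ v₂ h
    have hunit : star s * s = 1 := by
      rw [← starRingEnd_apply, conj_mul', hs]
      norm_num
    rw [sq_add_two_mul_conj_mul_equivariant s v₁ v₂ hunit, h, mul_zero]
end
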